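/- arXiv:2404.06811 — 8 statements merged into one kernel-verified Lean document; each statement's English description precedes it below -/
import Mathlib

section
/- Let N ≥ 1, let Ω ⊆ ℝ^N be a nonempty open set, let u₁, u₂ ∈ L¹(Ω;ℂ), and let U₁, U₂ : Ω → ℂ be measurable functions such that for j = 1,2 one has |U_j(x)| ≤ 1 for almost every x ∈ Ω and U_j(x) = u_j(x)/|u_j(x)| for almost every x ∈ Ω with u_j(x) ≠ 0. Then Re ∫_Ω (U₁(x) − U₂(x)) · conj(u₁(x) − u₂(x)) dx ≥ 0. -/
/-!
Pointwise this is the monotonicity of the subdifferential of the norm: if `‖a‖ ≤ 1` and `a = x / ‖x‖`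
whenever `x ≠ 0`, then `Re ⟪x, a⟫ = ‖x‖` while `Re ⟪y, a⟫ ≤ ‖y‖` for every `y`, so
`Re ⟪x - y, a - b⟫ ≥ ‖x‖ - ‖x‖ - ‖y‖ + ‖y‖ = 0`. Integrating the nonnegative real part gives the claim.
-/

open MeasureTheory Complex

section InnerProductSpace

variable {𝕜 E : Type*} [RCLike 𝕜] [NormedAddCommGroup E] [InnerProductSpace 𝕜 E]

lemma re_inner_le_norm_of_norm_le_one (x : E) {a : E} (ha : ‖a‖ ≤ 1) :
    RCLike.re (inner 𝕜 x a) ≤ ‖x‖ :=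
  calc RCLike.re (inner 𝕜 x a) ≤ ‖x‖ * ‖a‖ := re_inner_le_norm x a
    _ ≤ ‖x‖ := mul_le_of_le_one_right (norm_nonneg x) ha

lemma re_inner_eq_norm_of_eq_normalize {x a : E} (h : x ≠ 0 → a = (‖x‖ : 𝕜)⁻¹ • x) :
    RCLike.re (inner 𝕜 x a) = ‖x‖ := by
  rcases eq_or_ne x 0 with rfl | hx
  · simp
  rw [h hx, inner_smul_right, ← RCLike.ofReal_inv, RCLike.re_ofReal_mul, inner_self_eq_norm_sq]
  field_simp

theorem re_inner_sub_nonneg_of_eq_normalize {x y a b : E} (ha : ‖a‖ ≤ 1) (hb : ‖b‖ ≤ 1)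
    (hxa : x ≠ 0 → a = (‖x‖ : 𝕜)⁻¹ • x) (hyb : y ≠ 0 → b = (‖y‖ : 𝕜)⁻¹ • y) :
    0 ≤ RCLike.re (inner 𝕜 (x - y) (a - b)) := by
  have hxb := re_inner_le_norm_of_norm_le_one (𝕜 := 𝕜) x hb
  have hya := re_inner_le_norm_of_norm_le_one (𝕜 := 𝕜) y ha
  rw [inner_sub_left, inner_sub_right, inner_sub_right, map_sub, map_sub, map_sub,
    re_inner_eq_norm_of_eq_normalize (𝕜 := 𝕜) hxa, re_inner_eq_norm_of_eq_normalize (𝕜 := 𝕜) hyb]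
  linarith

end InnerProductSpace

lemma Complex.re_sub_mul_conj_sub_nonneg {a b x y : ℂ} (ha : ‖a‖ ≤ 1) (hb : ‖b‖ ≤ 1)
    (hxa : x ≠ 0 → a = x / (‖x‖ : ℂ)) (hyb : y ≠ 0 → b = y / (‖y‖ : ℂ)) :
    0 ≤ ((a - b) * (starRingEnd ℂ) (x - y)).re := by
  simp only [div_eq_inv_mul, ← smul_eq_mul] at hxa hyb
  simpa [RCLike.inner_apply] using re_inner_sub_nonneg_of_eq_normalize (𝕜 := ℂ) ha hb hxa hyb

theorem saturated_sections_monotone_general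
    (N : ℕ)
    (Ω : Set (EuclideanSpace ℝ (Fin N)))
    (u₁ u₂ U₁ U₂ : EuclideanSpace ℝ (Fin N) → ℂ)
    (hu₁ : IntegrableOn u₁ Ω volume) (hu₂ : IntegrableOn u₂ Ω volume)
    (hU₁m : Measurable U₁) (hU₂m : Measurable U₂)
    (hU₁b : ∀ᵐ x ∂(volume.restrict Ω), ‖U₁ x‖ ≤ 1)
    (hU₂b : ∀ᵐ x ∂(volume.restrict Ω), ‖U₂ x‖ ≤ 1)
    (hU₁ : ∀ᵐ x ∂(volume.restrict Ω), u₁ x ≠ 0 → U₁ x = u₁ x / (‖u₁ x‖ : ℂ))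
    (hU₂ : ∀ᵐ x ∂(volume.restrict Ω), u₂ x ≠ 0 → U₂ x = u₂ x / (‖u₂ x‖ : ℂ)) :
    0 ≤ (∫ x in Ω, (U₁ x - U₂ x) * (starRingEnd ℂ) (u₁ x - u₂ x)).re := by
  have hconj : IntegrableOn (fun x => (starRingEnd ℂ) (u₁ x - u₂ x)) Ω :=
    memLp_one_iff_integrable.1 (memLp_one_iff_integrable.2 (hu₁.sub hu₂)).star
  have hint : IntegrableOn (fun x => (U₁ x - U₂ x) * (starRingEnd ℂ) (u₁ x - u₂ x)) Ω := by
    refine hconj.bdd_mul (c := 2) (hU₁m.sub hU₂m).aestronglyMeasurable ?_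
    filter_upwards [hU₁b, hU₂b] with x h₁ h₂
    linarith [norm_sub_le (U₁ x) (U₂ x)]
  rw [← RCLike.re_to_complex, ← integral_re hint]
  refine integral_nonneg_of_ae ?_
  filter_upwards [hU₁b, hU₂b, hU₁, hU₂] with x h₁b h₂b h₁ h₂ using
    re_sub_mul_conj_sub_nonneg h₁b h₂b h₁ h₂

/-- Monotonicity of saturated sections (Lemma 7.1 of the paper):
if `U_j` are saturated sections associated to `u_j ∈ L¹(Ω;ℂ)`, then
`Re ∫_Ω (U₁ - U₂) · conj(u₁ - u₂) ≥ 0`. -/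
theorem saturated_sections_monotone
    (N : ℕ) (hN : 1 ≤ N)
    (Ω : Set (EuclideanSpace ℝ (Fin N))) (hΩ : IsOpen Ω) (hΩne : Ω.Nonempty)
    (u₁ u₂ U₁ U₂ : EuclideanSpace ℝ (Fin N) → ℂ)
    (hu₁ : IntegrableOn u₁ Ω volume) (hu₂ : IntegrableOn u₂ Ω volume)
    (hU₁m : Measurable U₁) (hU₂m : Measurable U₂)
    (hU₁b : ∀ᵐ x ∂(volume.restrict Ω), ‖U₁ x‖ ≤ 1)
    (hU₂b : ∀ᵐ x ∂(volume.restrict Ω), ‖U₂ x‖ ≤ 1)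
    (hU₁ : ∀ᵐ x ∂(volume.restrict Ω), u₁ x ≠ 0 → U₁ x = u₁ x / (‖u₁ x‖ : ℂ))
    (hU₂ : ∀ᵐ x ∂(volume.restrict Ω), u₂ x ≠ 0 → U₂ x = u₂ x / (‖u₂ x‖ : ℂ)) :
    0 ≤ (∫ x in Ω, (U₁ x - U₂ x) * (starRingEnd ℂ) (u₁ x - u₂ x)).re :=
  saturated_sections_monotone_general N Ω u₁ u₂ U₁ U₂ hu₁ hu₂ hU₁m hU₂m hU₁b hU₂b hU₁ hU₂
end

section
/- Let t ∈ ℝ and let φ : ℝ → ℂ be Lebesgue integrable. Then, as h → 0 with h ≠ 0, ∫_ℝ ((arctan|t + h + x| − arctan|t + x|)/h) · φ(x) dx converges to ∫_ℝ (sign(t + x)/(1 + (t + x)²)) · φ(x) dx. In other words, the map t ↦ (x ↦ arctan|t+x|), viewed with values in L^∞(ℝ), is weakly★ differentiable at every t ∈ ℝ with weak★ derivative x ↦ sign(t+x)/(1+(t+x)²), whose L^∞ norm is at most 1. -/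
open MeasureTheory Filter Topology

lemma arctan_lip (a b : ℝ) : |Real.arctan a - Real.arctan b| ≤ |a - b| := by
  have := (convex_univ (𝕜 := ℝ)).norm_image_sub_le_of_norm_hasDerivWithin_le
    (f := Real.arctan) (f' := fun x => 1 / (1 + x ^ 2)) (C := 1)
    (fun x _ => (Real.hasDerivAt_arctan x).hasDerivWithinAt)
    (fun x _ => by
      rw [Real.norm_eq_abs, abs_of_pos (by positivity)]
      rw [div_le_one (by positivity)]
      nlinarith [sq_nonneg x])
    (Set.mem_univ b) (Set.mem_univ a)
  simpa using this

lemma arctan_abs_deriv {s : ℝ} (hs : s ≠ 0) :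
    HasDerivAt (fun y => Real.arctan |y|) (Real.sign s / (1 + s ^ 2)) s := by
  rcases hs.lt_or_gt with h | h
  · have key : HasDerivAt (fun y : ℝ => Real.arctan (-y)) (-(1 / (1 + s ^ 2))) s := by
      have h0 := (Real.hasDerivAt_arctan (-s)).comp s (hasDerivAt_neg s)
      simpa only [Function.comp_def, neg_sq, mul_neg_one] using h0
    have : Real.sign s / (1 + s ^ 2) = -(1 / (1 + s ^ 2)) := by
      rw [Real.sign_of_neg h]; ring
    rw [this]
    apply key.congr_of_eventuallyEq
    filter_upwards [eventually_lt_nhds h] with y hy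
    rw [abs_of_neg hy]
  · have : Real.sign s / (1 + s ^ 2) = 1 / (1 + s ^ 2) := by
      rw [Real.sign_of_pos h]
    rw [this]
    apply (Real.hasDerivAt_arctan s).congr_of_eventuallyEq
    filter_upwards [eventually_gt_nhds h] with y hy
    rw [abs_of_pos hy]

/-- Weak★ differentiability of `t ↦ (x ↦ arctan|t+x|)` with values in `L^∞(ℝ)`:
for every integrable `φ`, the difference quotients paired against `φ` converge to
the pairing with `x ↦ sign(t+x)/(1+(t+x)²)`, whose `L^∞` norm is at most `1`. -/
theorem arctan_abs_weakStar_differentiable (t : ℝ) (φ : ℝ → ℂ)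
    (hφ : Integrable φ (volume : Measure ℝ)) :
    (∀ x : ℝ, |Real.sign (t + x) / (1 + (t + x) ^ 2)| ≤ 1) ∧
    Tendsto
      (fun h : ℝ =>
        ∫ x : ℝ, (((Real.arctan (|t + h + x|) - Real.arctan (|t + x|)) / h : ℝ) : ℂ) * φ x)
      (𝓝[≠] (0 : ℝ))
      (𝓝 (∫ x : ℝ, ((Real.sign (t + x) / (1 + (t + x) ^ 2) : ℝ) : ℂ) * φ x)) := by
  have hsign : ∀ s : ℝ, |Real.sign s / (1 + s ^ 2)| ≤ 1 := by
    intro s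
    rw [abs_div, abs_of_pos (by positivity : (0:ℝ) < 1 + s ^ 2),
      div_le_one (by positivity)]
    have h1 : |Real.sign s| ≤ 1 := by
      rcases lt_trichotomy s 0 with h | h | h
      · simp [Real.sign_of_neg h]
      · simp [h]
      · simp [Real.sign_of_pos h]
    nlinarith [sq_nonneg s]
  refine ⟨fun x => hsign (t + x), ?_⟩
  -- quotient bound
  have hquot : ∀ h : ℝ, h ≠ 0 → ∀ x : ℝ,
      |(Real.arctan |t + h + x| - Real.arctan |t + x|) / h| ≤ 1 := by
    intro h hh x
    rw [abs_div, div_le_one (abs_pos.mpr hh)]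
    have h1 := arctan_lip (|t + h + x|) (|t + x|)
    have h2 := abs_abs_sub_abs_le_abs_sub (t + h + x) (t + x)
    have h3 : (t + h + x) - (t + x) = h := by ring
    rw [h3] at h2
    exact le_trans h1 h2
  apply tendsto_integral_filter_of_dominated_convergence (fun x => ‖φ x‖)
  · filter_upwards [self_mem_nhdsWithin] with h hh
    apply AEStronglyMeasurable.mul _ hφ.1
    apply Continuous.aestronglyMeasurable
    exact (Complex.continuous_ofReal.comp <|
      (((Real.continuous_arctan.comp (continuous_abs.comp (by fun_prop))).sub
        (Real.continuous_arctan.comp (continuous_abs.comp (by fun_prop)))).div_const h))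
  · filter_upwards [self_mem_nhdsWithin] with h hh
    refine Eventually.of_forall fun x => ?_
    rw [norm_mul]
    have : ‖(((Real.arctan |t + h + x| - Real.arctan |t + x|) / h : ℝ) : ℂ)‖
        = |(Real.arctan |t + h + x| - Real.arctan |t + x|) / h| := by
      rw [Complex.norm_real, Real.norm_eq_abs]
    rw [this]
    calc |(Real.arctan |t + h + x| - Real.arctan |t + x|) / h| * ‖φ x‖
        ≤ 1 * ‖φ x‖ := by
          apply mul_le_mul_of_nonneg_right (hquot h hh x) (norm_nonneg _)
      _ = ‖φ x‖ := one_mul _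
  · exact hφ.norm
  · -- a.e. convergence
    have hmeas : ∀ᵐ x : ℝ, t + x ≠ 0 := by
      rw [ae_iff]
      have : {x : ℝ | ¬ t + x ≠ 0} = {-t} := by
        ext x; simp [not_not]; constructor <;> intro h <;> linarith
      rw [this]
      simp
    filter_upwards [hmeas] with x hx
    have hd := arctan_abs_deriv hx
    rw [hasDerivAt_iff_tendsto_slope] at hd
    have hcomp : Tendsto (fun h : ℝ => t + h + x) (𝓝[≠] (0 : ℝ)) (𝓝[≠] (t + x)) := by
      apply tendsto_nhdsWithin_of_tendsto_nhds_of_eventually_within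
      · have : Tendsto (fun h : ℝ => t + h + x) (𝓝 (0 : ℝ)) (𝓝 (t + 0 + x)) :=
          ((continuous_const.add continuous_id).add continuous_const).tendsto 0
        simpa using this.mono_left nhdsWithin_le_nhds
      · filter_upwards [self_mem_nhdsWithin] with h hh
        simp only [Set.mem_compl_iff, Set.mem_singleton_iff]
        intro hc
        apply hh
        have : h = (t + h + x) - (t + x) := by ring
        rw [this, hc, sub_self]
        rfl
    have htend : Tendsto
        (fun h : ℝ => (Real.arctan |t + h + x| - Real.arctan |t + x|) / h)
        (𝓝[≠] (0 : ℝ)) (𝓝 (Real.sign (t + x) / (1 + (t + x) ^ 2))) := by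
      have := hd.comp hcomp
      apply this.congr
      intro h
      simp only [Function.comp_apply, slope_def_field]
      congr 1
      ring
    exact ((Complex.continuous_ofReal.tendsto _).comp htend).mul_const (φ x)
end

section
/- For t ∈ ℝ define g_t : ℝ → ℝ by g_t(x) = sign(t + x)/(1 + (t + x)²). Then for every Lebesgue-null set N ⊆ ℝ, the family {g_t : t ∈ ℝ∖N}, viewed as a subset of L^∞(ℝ) (i.e. as equivalence classes modulo equality almost everywhere, with the essential supremum distance), admits no countable dense subset; that is, it is not separable in L^∞(ℝ). -/
/-!
Any two distinct translates `g_t`, `g_s` with `t < s` differ by more than `1/2` on the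
interval of points `x` where `-1 < t + x < 0 < s + x`, which has positive length, so the
family is `1/2`-separated in `L^∞`. A countable set that approximates every member to within
`1/4` would then receive an injection from the complement of `N`; but the complement of a null set
of reals is uncountable.
-/

open MeasureTheory
open scoped ENNReal

section EssSup

variable {α E : Type*} [MeasurableSpace α] [NormedAddCommGroup E] {μ : Measure α}

lemma eLpNormEssSup_sub_comm (f g : α → E) :
    eLpNormEssSup (f - g) μ = eLpNormEssSup (g - f) μ := by
  simpa only [eLpNorm_exponent_top] using eLpNorm_sub_comm f g ∞ μ

lemma eLpNormEssSup_sub_le_add (f g h : α → E) :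
    eLpNormEssSup (f - g) μ ≤ eLpNormEssSup (f - h) μ + eLpNormEssSup (h - g) μ := by
  rw [← sub_add_sub_cancel f h g]
  exact eLpNormEssSup_add_le

lemma le_eLpNormEssSup_of_forall_le_enorm {f : α → E} {s : Set α} {c : ℝ≥0∞}
    (hs : μ s ≠ 0) (h : ∀ x ∈ s, c ≤ ‖f x‖ₑ) : c ≤ eLpNormEssSup f μ := by
  by_contra hlt
  refine hs (measure_mono_null (fun x hx hle => hlt ((h x hx).trans hle)) ?_)
  exact ae_iff.mp ae_le_eLpNormEssSup

lemma Set.Countable.of_eLpNormEssSup_separated {ι : Type*} {F : ι → α → E} {S : Set ι}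
    {δ : ℝ≥0∞} {D : Set (α → E)} (hD : D.Countable)
    (hsep : S.Pairwise fun i j => δ ≤ eLpNormEssSup (F i - F j) μ)
    (happrox : ∀ i ∈ S, ∃ h ∈ D, eLpNormEssSup (F i - h) μ < δ / 2) :
    S.Countable := by
  choose! a haD ha using happrox
  refine Set.MapsTo.countable_of_injOn haD (fun i hi j hj hij => ?_) hD
  by_contra hne
  have hlt : eLpNormEssSup (F i - F j) μ < δ :=
    calc eLpNormEssSup (F i - F j) μ
        ≤ eLpNormEssSup (F i - a i) μ + eLpNormEssSup (a j - F j) μ := by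
          rw [hij]; exact eLpNormEssSup_sub_le_add _ _ _
      _ < δ / 2 + δ / 2 := by
          rw [eLpNormEssSup_sub_comm (a j)]; exact ENNReal.add_lt_add (ha i hi) (ha j hj)
      _ = δ := ENNReal.add_halves δ
  exact (hsep hi hj hne).not_gt hlt

end EssSup

noncomputable def signBump (t : ℝ) : ℝ → ℝ := fun x => Real.sign (t + x) / (1 + (t + x) ^ 2)

lemma half_lt_signBump_sub_of_mem {t s x : ℝ} (hx : x ∈ Set.Ioo (max (-s) (-t - 1)) (-t)) :
    1 / 2 < signBump s x - signBump t x := by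
  obtain ⟨hlo, hhi⟩ := hx
  rw [max_lt_iff] at hlo
  have hs : 0 < s + x := by linarith
  have ht_neg : t + x < 0 := by linarith
  have ht_sq : (t + x) ^ 2 < 1 := by nlinarith
  have hsx : 0 < 1 / (1 + (s + x) ^ 2) := by positivity
  have htx : 1 / 2 < 1 / (1 + (t + x) ^ 2) := by
    rw [lt_div_iff₀ (by positivity)]; linarith
  simp only [signBump, Real.sign_of_pos hs, Real.sign_of_neg ht_neg]
  linarith [show (-1 : ℝ) / (1 + (t + x) ^ 2) = -(1 / (1 + (t + x) ^ 2)) by ring]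

lemma half_le_eLpNormEssSup_signBump_sub_of_lt {t s : ℝ} (hts : t < s) :
    (1 / 2 : ℝ≥0∞) ≤ eLpNormEssSup (signBump s - signBump t) volume := by
  refine le_eLpNormEssSup_of_forall_le_enorm (s := Set.Ioo (max (-s) (-t - 1)) (-t)) ?_ ?_
  · rw [Real.volume_Ioo, ne_eq, ENNReal.ofReal_eq_zero, not_le, sub_pos, max_lt_iff]
    constructor <;> linarith
  · intro x hx
    have hhalf := half_lt_signBump_sub_of_mem hx
    rw [Pi.sub_apply, Real.enorm_eq_ofReal_abs, abs_of_pos (by linarith)]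
    calc (1 / 2 : ℝ≥0∞) = ENNReal.ofReal (1 / 2) := by
          rw [ENNReal.ofReal_div_of_pos two_pos]; simp
      _ ≤ _ := ENNReal.ofReal_le_ofReal hhalf.le

lemma pairwise_half_le_eLpNormEssSup_signBump_sub :
    Pairwise fun t s => (1 / 2 : ℝ≥0∞) ≤ eLpNormEssSup (signBump t - signBump s) volume := by
  intro t s hne
  rcases hne.lt_or_gt with hts | hst
  · rw [eLpNormEssSup_sub_comm]
    exact half_le_eLpNormEssSup_signBump_sub_of_lt hts
  · exact half_le_eLpNormEssSup_signBump_sub_of_lt hst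

/-- Nonseparability of the family of derivatives in the nonmeasurability example:
for every Lebesgue-null set `N ⊆ ℝ`, the family `{g_t : t ∉ N}`, where
`g_t(x) = sign(t+x)/(1+(t+x)²)`, viewed in `L^∞(ℝ)` (with the essential supremum
distance), admits no countable dense subset. -/
theorem sign_deriv_family_not_separable (Nset : Set ℝ) (hNset : volume Nset = 0) :
    ¬ ∃ D : Set (ℝ → ℝ), D.Countable ∧
        D ⊆ {g : ℝ → ℝ | ∃ t ∉ Nset, g = fun x => Real.sign (t + x) / (1 + (t + x) ^ 2)} ∧
        ∀ t ∉ Nset, ∀ ε : ℝ≥0∞, 0 < ε → ∃ h ∈ D,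
          eLpNormEssSup
            (fun x : ℝ => Real.sign (t + x) / (1 + (t + x) ^ 2) - h x)
            (volume : Measure ℝ) < ε := by
  rintro ⟨D, hD, -, hdense⟩
  have hcompl : Nsetᶜ.Countable :=
    hD.of_eLpNormEssSup_separated (F := signBump) (δ := 1 / 2)
      (pairwise_half_le_eLpNormEssSup_signBump_sub.set_pairwise _)
      (fun t ht => hdense t ht _ (by norm_num))
  have huniv : volume (Set.univ : Set ℝ) = 0 := by
    rw [← Set.union_compl_self Nset]
    exact measure_union_null hNset (hcompl.measure_zero _)
  simp at huniv
end

section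
/- Let N ≥ 1, let Ω ⊆ ℝ^N be a nonempty open set, let n ≥ 1 be an integer, and let f : Ω → ℂ be measurable. Then ∫_Ω |f(x)| dx ≤ ‖f‖_{Y_n}, i.e. ∫_Ω |f(x)| dx ≤ (2 κ_N n^N)^{1/(n+1)} · ( ∫_{Ω_n} |f(x)|^{1+ε_n} dx + ∫_{Ω∖Ω_n} |f(x)|^{1+ε_n} |x|^{ε_n(N+ε_n)} dx )^{1/(1+ε_n)}. -/
open MeasureTheory
open scoped ENNReal

/-- The `Y_n`-norm of a measurable function `f : Ω → ℂ`, for `Ω ⊆ ℝ^N`: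
`‖f‖_{Y_n} = (2 κ_N n^N)^{1/(n+1)} · ( ∫_{Ω_n} |f|^{1+εₙ} + ∫_{Ω∖Ω_n} |f|^{1+εₙ} |x|^{εₙ(N+εₙ)} )^{1/(1+εₙ)}`,
where `εₙ = 1/n`, `Ω_n = {x ∈ Ω : |x| ≤ n}`, and `κ_N = N·vol(B(0,1))` is the surface
measure of the unit sphere of `ℝ^N`. The value `+∞` is allowed. -/
noncomputable def Ynorm (N : ℕ) (Ω : Set (EuclideanSpace ℝ (Fin N))) (n : ℕ)
    (f : EuclideanSpace ℝ (Fin N) → ℂ) : ℝ≥0∞ :=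
  (2 * ((N : ℝ≥0∞) * volume (Metric.ball (0 : EuclideanSpace ℝ (Fin N)) 1)) * (n : ℝ≥0∞) ^ N)
      ^ ((1 : ℝ) / ((n : ℝ) + 1)) *
    ((∫⁻ x in Ω ∩ {x | ‖x‖ ≤ (n : ℝ)}, (‖f x‖₊ : ℝ≥0∞) ^ (1 + 1 / (n : ℝ)) ∂volume)
        + ∫⁻ x in Ω \ {x | ‖x‖ ≤ (n : ℝ)},
            (‖f x‖₊ : ℝ≥0∞) ^ (1 + 1 / (n : ℝ))
              * (‖x‖₊ : ℝ≥0∞) ^ ((1 / (n : ℝ)) * ((N : ℝ) + 1 / (n : ℝ))) ∂volume)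
      ^ ((1 : ℝ) / (1 + 1 / (n : ℝ)))

/-! Split `Ω` at the sphere `|x| = n` and use Hölder with the conjugate exponents
`p = 1 + εₙ`, `q = n + 1` on both pieces, in the weighted form
`∫ |f| ≤ (∫ |f|^p w)^{1/p} (∫ w^{1-q})^{1/q}`. Inside the ball take `w = 1`, so the second factor
is controlled by `vol(B(0, n)) = n^N vol(B(0,1)) ≤ κ_N n^N`. Outside take `w = |x|^{εₙ(N+εₙ)}`,
for which `w^{1-q} = |x|^{-(N+εₙ)}`; in polar coordinates its integral over `|x| > n` is
`κ_N n^{-εₙ} / εₙ ≤ κ_N n^N`. Finally `s^{1/p} + t^{1/p} ≤ 2^{1/q} (s + t)^{1/p}` merges the two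
bounds. -/

open Set Metric

namespace ENNReal

theorem rpow_one_div_add_rpow_one_div_le {p q : ℝ} (hpq : p.HolderConjugate q)
    (a b : ℝ≥0∞) : a ^ (1 / p) + b ^ (1 / p) ≤ 2 ^ (1 / q) * (a + b) ^ (1 / p) := by
  have h := ENNReal.inner_le_Lp_mul_Lq Finset.univ ![a ^ (1 / p), b ^ (1 / p)] 1 hpq
  simp only [Fin.sum_univ_two, Matrix.cons_val_zero, Matrix.cons_val_one, Pi.one_apply, mul_one,
    one_rpow, ← rpow_mul, one_div_mul_cancel hpq.ne_zero, rpow_one] at h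
  rw [mul_comm]
  convert h using 3
  norm_num

end ENNReal

section WeightedHolder

variable {α : Type*} [MeasurableSpace α] {μ : Measure α}

theorem lintegral_le_weighted_Lp_mul_Lq {p q : ℝ} (hpq : p.HolderConjugate q)
    {f w : α → ℝ≥0∞} (hf : AEMeasurable f μ) (hw : AEMeasurable w μ)
    (hw0 : ∀ᵐ x ∂μ, w x ≠ 0) (hwt : ∀ᵐ x ∂μ, w x ≠ ∞) :
    ∫⁻ x, f x ∂μ ≤
      (∫⁻ x, f x ^ p * w x ∂μ) ^ (1 / p) * (∫⁻ x, w x ^ (1 - q) ∂μ) ^ (1 / q) := by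
  have hsplit : f =ᵐ[μ] (fun x ↦ f x * w x ^ (1 / p)) * fun x ↦ w x ^ (-(1 / p)) := by
    filter_upwards [hw0, hwt] with x hx0 hxt
    rw [Pi.mul_apply, mul_assoc, ← ENNReal.rpow_add _ _ hx0 hxt, add_neg_cancel,
      ENNReal.rpow_zero, mul_one]
  calc ∫⁻ x, f x ∂μ = ∫⁻ x, ((fun x ↦ f x * w x ^ (1 / p)) * fun x ↦ w x ^ (-(1 / p))) x ∂μ :=
        lintegral_congr_ae hsplit
    _ ≤ _ := ENNReal.lintegral_mul_le_Lp_mul_Lq μ hpq (hf.mul (hw.pow_const _)) (hw.pow_const _)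
    _ = _ := by
      congr 3 with x
      · rw [ENNReal.mul_rpow_of_nonneg _ _ hpq.nonneg, ← ENNReal.rpow_mul,
          one_div_mul_cancel hpq.ne_zero, ENNReal.rpow_one]
      · rw [← ENNReal.rpow_mul, neg_mul, one_div_mul_eq_div, hpq.symm.div_conj_eq_sub_one,
          neg_sub]

theorem setLIntegral_le_rpow_mul_lintegral_inter_add_sdiff {p q : ℝ} (hpq : p.HolderConjugate q)
    {f w : α → ℝ≥0∞} {A S : Set α} {K : ℝ≥0∞} (hS : MeasurableSet S)
    (hf : AEMeasurable f μ) (hw : AEMeasurable w μ)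
    (hw0 : ∀ᵐ x ∂μ, w x ≠ 0) (hwt : ∀ᵐ x ∂μ, w x ≠ ∞)
    (hAS : μ (A ∩ S) ≤ K) (hw_int : ∫⁻ x in A \ S, w x ^ (1 - q) ∂μ ≤ K) :
    ∫⁻ x in A, f x ∂μ ≤ (2 * K) ^ (1 / q) *
      (∫⁻ x in A ∩ S, f x ^ p ∂μ + ∫⁻ x in A \ S, f x ^ p * w x ∂μ) ^ (1 / p) := by
  set I₁ := ∫⁻ x in A ∩ S, f x ^ p ∂μ
  set I₂ := ∫⁻ x in A \ S, f x ^ p * w x ∂μ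
  have hinner : ∫⁻ x in A ∩ S, f x ∂μ ≤ I₁ ^ (1 / p) * K ^ (1 / q) := by
    have h := lintegral_le_weighted_Lp_mul_Lq hpq (hf.restrict (s := A ∩ S))
      aemeasurable_const (w := 1) (ae_of_all _ fun _ ↦ one_ne_zero)
      (ae_of_all _ fun _ ↦ ENNReal.one_ne_top)
    simp only [Pi.one_apply, mul_one, ENNReal.one_rpow, lintegral_const, one_mul,
      Measure.restrict_apply MeasurableSet.univ, univ_inter] at h
    exact h.trans (by gcongr; exact hpq.symm.one_div_nonneg)
  have houter : ∫⁻ x in A \ S, f x ∂μ ≤ I₂ ^ (1 / p) * K ^ (1 / q) :=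
    (lintegral_le_weighted_Lp_mul_Lq hpq hf.restrict hw.restrict (ae_restrict_of_ae hw0)
      (ae_restrict_of_ae hwt)).trans (by gcongr; exact hpq.symm.one_div_nonneg)
  calc ∫⁻ x in A, f x ∂μ = ∫⁻ x in A ∩ S, f x ∂μ + ∫⁻ x in A \ S, f x ∂μ :=
        (lintegral_inter_add_sdiff f A hS).symm
    _ ≤ (I₁ ^ (1 / p) + I₂ ^ (1 / p)) * K ^ (1 / q) := by
        rw [add_mul]; exact add_le_add hinner houter
    _ ≤ 2 ^ (1 / q) * (I₁ + I₂) ^ (1 / p) * K ^ (1 / q) := by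
        gcongr; exact ENNReal.rpow_one_div_add_rpow_one_div_le hpq I₁ I₂
    _ = (2 * K) ^ (1 / q) * (I₁ + I₂) ^ (1 / p) := by
        rw [ENNReal.mul_rpow_of_nonneg _ _ hpq.symm.one_div_nonneg]; ring

end WeightedHolder

theorem lintegral_Ioi_ofReal_rpow_of_lt {a c : ℝ} (ha : a < -1) (hc : 0 < c) :
    ∫⁻ y in Ioi c, ENNReal.ofReal (y ^ a) = ENNReal.ofReal (-c ^ (a + 1) / (a + 1)) := by
  rw [← integral_Ioi_rpow_of_lt ha hc, ofReal_integral_eq_lintegral_ofReal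
    (integrableOn_Ioi_rpow_of_lt ha hc)]
  filter_upwards [ae_restrict_mem measurableSet_Ioi] with y hy
  exact Real.rpow_nonneg (hc.trans hy).le _

section AddHaar

variable {E : Type*} [NormedAddCommGroup E] [NormedSpace ℝ E] [MeasurableSpace E] [BorelSpace E]
  [FiniteDimensional ℝ E] (μ : Measure E) [μ.IsAddHaarMeasure] [Nontrivial E]

theorem lintegral_fun_norm_addHaar {g : ℝ → ℝ≥0∞} (hg : Measurable g) :
    ∫⁻ x, g ‖x‖ ∂μ = Module.finrank ℝ E * μ (ball 0 1) *
      ∫⁻ y in Ioi (0 : ℝ), ENNReal.ofReal (y ^ (Module.finrank ℝ E - 1)) * g y := by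
  have hg' : Measurable fun p : sphere (0 : E) 1 × Ioi (0 : ℝ) ↦ g p.2 :=
    hg.comp (measurable_subtype_coe.comp measurable_snd)
  calc ∫⁻ x, g ‖x‖ ∂μ = ∫⁻ x : ({0}ᶜ : Set E), g ‖(x : E)‖ ∂μ.comap (↑) := by
        rw [lintegral_subtype_comap (measurableSet_singleton 0).compl (fun x ↦ g ‖x‖),
          restrict_compl_singleton]
    _ = ∫⁻ p, g p.2 ∂μ.toSphere.prod (.volumeIoiPow (Module.finrank ℝ E - 1)) := by
        simpa only [Function.comp_def, homeomorphUnitSphereProd_apply_snd_coe] using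
          (μ.measurePreserving_homeomorphUnitSphereProd.lintegral_comp hg')
    _ = μ.toSphere univ * ∫⁻ y, g y ∂.volumeIoiPow (Module.finrank ℝ E - 1) := by
        rw [lintegral_prod _ hg'.aemeasurable]
        simp [lintegral_const, mul_comm]
    _ = _ := by
        rw [Measure.toSphere_apply_univ, Measure.volumeIoiPow,
          lintegral_withDensity_eq_lintegral_mul _ (g := fun y : Ioi (0 : ℝ) ↦ g y)
            (measurable_subtype_coe.pow_const _).ennreal_ofReal (hg.comp measurable_subtype_coe)]
        exact congrArg _ (lintegral_subtype_comap measurableSet_Ioi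
          fun y ↦ ENNReal.ofReal (y ^ (Module.finrank ℝ E - 1)) * g y)

theorem setLIntegral_norm_rpow_neg_eq {R ε : ℝ} (hR : 0 < R) (hε : 0 < ε) :
    ∫⁻ x in {x : E | R < ‖x‖}, ‖x‖ₑ ^ (-(Module.finrank ℝ E + ε)) ∂μ
      = Module.finrank ℝ E * μ (ball 0 1) * ENNReal.ofReal (R ^ (-ε) / ε) := by
  set d := Module.finrank ℝ E
  set g : ℝ → ℝ≥0∞ := (Ioi R).indicator fun r ↦ ENNReal.ofReal r ^ (-(d + ε))
  have hg : Measurable g :=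
    (by fun_prop : Measurable fun r : ℝ ↦ ENNReal.ofReal r ^ (-(d + ε))).indicator
      measurableSet_Ioi
  have hsphere : ∫⁻ x in {x : E | R < ‖x‖}, ‖x‖ₑ ^ (-(d + ε)) ∂μ = ∫⁻ x, g ‖x‖ ∂μ := by
    rw [← lintegral_indicator (measurableSet_lt measurable_const measurable_norm)]
    congr with x
    simp only [g, indicator_apply, mem_ofPred_eq, mem_Ioi, ofReal_norm]
  have hradial : ∀ y ∈ Ioi (0 : ℝ), ENNReal.ofReal (y ^ (d - 1)) * g y
      = (Ioi R).indicator (fun y ↦ ENNReal.ofReal (y ^ (-(1 + ε)))) y := by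
    intro y (hy : 0 < y)
    by_cases hRy : R < y
    · have hd : ((d - 1 : ℕ) : ℝ) + -(d + ε) = -(1 + ε) := by
        rw [Nat.cast_sub Module.finrank_pos]; push_cast; ring
      simp only [g, indicator_of_mem (mem_Ioi.2 hRy)]
      rw [ENNReal.ofReal_rpow_of_pos hy, ← ENNReal.ofReal_mul (by positivity),
        ← Real.rpow_natCast, ← Real.rpow_add hy, hd]
    · simp [g, hRy]
  rw [hsphere, lintegral_fun_norm_addHaar μ hg,
    setLIntegral_congr_fun measurableSet_Ioi hradial, setLIntegral_indicator measurableSet_Ioi,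
    Ioi_inter_Ioi, max_eq_left hR.le, lintegral_Ioi_ofReal_rpow_of_lt (by linarith) hR]
  congr 2
  rw [show -(1 + ε) + 1 = -ε by ring, neg_div_neg_eq]

theorem addHaar_closedBall_zero_le {R : ℝ} (hR : 0 ≤ R) :
    μ (closedBall 0 R) ≤
      Module.finrank ℝ E * μ (ball 0 1) * ENNReal.ofReal R ^ Module.finrank ℝ E := by
  rw [μ.addHaar_closedBall _ hR, ENNReal.ofReal_pow hR, mul_comm, mul_assoc]
  exact le_mul_of_one_le_left' (mod_cast Module.finrank_pos)

theorem setLIntegral_norm_rpow_neg_le {R ε : ℝ} (hR : 1 ≤ R) (hε : 0 < ε) (hRε : 1 ≤ R * ε) :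
    ∫⁻ x in {x : E | R < ‖x‖}, ‖x‖ₑ ^ (-(Module.finrank ℝ E + ε)) ∂μ
      ≤ Module.finrank ℝ E * μ (ball 0 1) * ENNReal.ofReal R ^ Module.finrank ℝ E := by
  rw [setLIntegral_norm_rpow_neg_eq μ (by linarith) hε, ← ENNReal.ofReal_pow (by linarith)]
  gcongr
  calc R ^ (-ε) / ε ≤ 1 / ε := by
        gcongr; exact Real.rpow_le_one_of_one_le_of_nonpos hR (by linarith)
    _ ≤ R := by rwa [div_le_iff₀ hε]
    _ ≤ R ^ Module.finrank ℝ E := le_self_pow₀ hR Module.finrank_pos.ne'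

end AddHaar

theorem lintegral_le_Ynorm_general
    (N : ℕ) (hN : 1 ≤ N)
    (Ω : Set (EuclideanSpace ℝ (Fin N)))
    (n : ℕ) (hn : 1 ≤ n)
    (f : EuclideanSpace ℝ (Fin N) → ℂ) (hf : Measurable f) :
    (∫⁻ x in Ω, (‖f x‖₊ : ℝ≥0∞) ∂volume) ≤ Ynorm N Ω n f := by
  have hdim : Module.finrank ℝ (EuclideanSpace ℝ (Fin N)) = N := finrank_euclideanSpace_fin
  have : Nontrivial (EuclideanSpace ℝ (Fin N)) :=
    Module.nontrivial_of_finrank_pos (R := ℝ) (by omega)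
  have hn0 : (0 : ℝ) < n := by exact_mod_cast hn
  have hpq : (1 + 1 / (n : ℝ)).HolderConjugate (n + 1) := by
    rw [Real.holderConjugate_iff]
    exact ⟨by simp [hn0], by field_simp⟩
  have hexp : 1 / (n : ℝ) * (N + 1 / n) * (1 - (n + 1)) =
      -(Module.finrank ℝ (EuclideanSpace ℝ (Fin N)) + 1 / n) := by
    rw [hdim]; field_simp; ring
  have hball := (measure_mono (s := Ω ∩ {x | ‖x‖ ≤ (n : ℝ)})
    fun x hx ↦ mem_closedBall_zero_iff.2 hx.2).trans (addHaar_closedBall_zero_le volume hn0.le)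
  refine (setLIntegral_le_rpow_mul_lintegral_inter_add_sdiff hpq
    (measurableSet_le measurable_norm measurable_const) hf.enorm.aemeasurable
    (measurable_enorm.pow_const (1 / (n : ℝ) * (N + 1 / n))).aemeasurable
    ?_ ?_ hball ?_).trans_eq ?_
  · filter_upwards [volume.ae_ne 0] with x hx
    exact (ENNReal.rpow_pos (enorm_pos.2 hx) enorm_ne_top).ne'
  · exact ae_of_all _ fun x ↦ ENNReal.rpow_ne_top_of_nonneg (by positivity) enorm_ne_top
  · simp_rw [← ENNReal.rpow_mul, hexp]
    refine (lintegral_mono_set fun x hx ↦ not_le.1 (show ¬‖x‖ ≤ n from hx.2)).trans ?_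
    exact setLIntegral_norm_rpow_neg_le volume (mod_cast hn) (by positivity)
      (by rw [mul_one_div_cancel hn0.ne'])
  · simp only [Ynorm, hdim, ENNReal.ofReal_natCast, enorm_eq_nnnorm, mul_assoc]

/-- `L¹`–`Y_n` estimate: `‖f‖_{L¹(Ω)} ≤ ‖f‖_{Y_n}` for every measurable `f : Ω → ℂ`. -/
theorem lintegral_le_Ynorm
    (N : ℕ) (hN : 1 ≤ N)
    (Ω : Set (EuclideanSpace ℝ (Fin N))) (hΩ : IsOpen Ω) (hΩne : Ω.Nonempty)
    (n : ℕ) (hn : 1 ≤ n)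
    (f : EuclideanSpace ℝ (Fin N) → ℂ) (hf : Measurable f) :
    (∫⁻ x in Ω, (‖f x‖₊ : ℝ≥0∞) ∂volume) ≤ Ynorm N Ω n f :=
  lintegral_le_Ynorm_general N hN Ω n hn f hf
end

section
/- Let N ≥ 1, let Ω ⊆ ℝ^N be a nonempty open set, and let n ≥ 1 be an integer. There exists a constant C = C(N, n) > 0 such that for every measurable f : Ω → ℂ one has ‖f‖_{Y_{n+1}} ≤ C · ‖f‖_{Y_n}. In particular the space of measurable f with ‖f‖_{Y_n} < ∞ embeds continuously into the space of those with ‖f‖_{Y_{n+1}} < ∞. -/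
open MeasureTheory
open scoped ENNReal NNReal

/-!
Write `q = 1 + 1/n`, `p = 1 + 1/(n+1)` and `w_n` for the weight of `Y_n` (`1` on `|x| ≤ n`,
`|x|^{k_n}` outside, `k_n = (N + 1/n)/n`). If `w_{n+1} ≤ w_n^{p/q} g`, Hölder's inequality with the
conjugate exponents `q/p` and `q/(q-p)` gives
`(∫ |f|^p w_{n+1})^{1/p} ≤ (∫ |f|^q w_n)^{1/q} (∫ g^{q/(q-p)})^{1/p - 1/q}`.
The function `g(x) = ((1 + |x|)/(n + 2))^{k_{n+1} - k_n p/q}` works, and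
`g^{q/(q-p)} = ((1 + |x|)/(n + 2))^{-(N + 2/n)}` is integrable on `ℝ^N` because `N + 2/n > N`.
-/

section Holder

variable {α : Type*} [MeasurableSpace α] {μ : Measure α}

theorem lintegral_rpow_mul_le_of_le_rpow_mul {p q : ℝ} (hp : 0 < p) (hpq : p < q)
    {F u v g : α → ℝ≥0∞} (hF : AEMeasurable F μ) (hu : AEMeasurable u μ)
    (hg : AEMeasurable g μ) (hvug : ∀ᵐ x ∂μ, v x ≤ u x ^ (p / q) * g x) :
    ∫⁻ x, F x ^ p * v x ∂μ
      ≤ (∫⁻ x, F x ^ q * u x ∂μ) ^ (p / q) * (∫⁻ x, g x ^ (q / (q - p)) ∂μ) ^ ((q - p) / q) := by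
  have hq : 0 < q := hp.trans hpq
  have hconj : (q / p).HolderConjugate (q / (q - p)) := by
    rw [Real.holderConjugate_iff, inv_div, inv_div, ← add_div, add_sub_cancel, div_self hq.ne']
    exact ⟨(one_lt_div hp).2 hpq, rfl⟩
  calc ∫⁻ x, F x ^ p * v x ∂μ ≤ ∫⁻ x, (F x ^ q * u x) ^ (p / q) * g x ∂μ := by
        refine lintegral_mono_ae (hvug.mono fun x hx => ?_)
        rw [ENNReal.mul_rpow_of_nonneg _ _ (by positivity), ← ENNReal.rpow_mul,
          mul_div_cancel₀ _ hq.ne', mul_assoc]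
        gcongr
    _ ≤ (∫⁻ x, ((F x ^ q * u x) ^ (p / q)) ^ (q / p) ∂μ) ^ (1 / (q / p))
          * (∫⁻ x, g x ^ (q / (q - p)) ∂μ) ^ (1 / (q / (q - p))) :=
        ENNReal.lintegral_mul_le_Lp_mul_Lq μ hconj (((hF.pow_const q).mul hu).pow_const _) hg
    _ = _ := by
        have hexp : p / q * (q / p) = 1 := by field_simp
        simp only [← ENNReal.rpow_mul, hexp, ENNReal.rpow_one, one_div_div]

theorem rpow_lintegral_rpow_mul_le_of_le_rpow_mul {p q : ℝ} (hp : 0 < p) (hpq : p < q)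
    {F u v g : α → ℝ≥0∞} (hF : AEMeasurable F μ) (hu : AEMeasurable u μ)
    (hg : AEMeasurable g μ) (hvug : ∀ᵐ x ∂μ, v x ≤ u x ^ (p / q) * g x) :
    (∫⁻ x, F x ^ p * v x ∂μ) ^ (1 / p)
      ≤ (∫⁻ x, F x ^ q * u x ∂μ) ^ (1 / q) * (∫⁻ x, g x ^ (q / (q - p)) ∂μ) ^ (1 / p - 1 / q) := by
  have hq : 0 < q := hp.trans hpq
  calc (∫⁻ x, F x ^ p * v x ∂μ) ^ (1 / p)
      ≤ ((∫⁻ x, F x ^ q * u x ∂μ) ^ (p / q)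
          * (∫⁻ x, g x ^ (q / (q - p)) ∂μ) ^ ((q - p) / q)) ^ (1 / p) := by
        gcongr
        exact lintegral_rpow_mul_le_of_le_rpow_mul hp hpq hF hu hg hvug
    _ = _ := by
        rw [ENNReal.mul_rpow_of_nonneg _ _ (by positivity), ← ENNReal.rpow_mul,
          ← ENNReal.rpow_mul]
        congr 2 <;> field_simp

end Holder

section Weight

variable {E : Type*} [SeminormedAddGroup E]

noncomputable def powWeight (R k : ℝ) (x : E) : ℝ := if ‖x‖ ≤ R then 1 else ‖x‖ ^ k

theorem one_le_powWeight {R k : ℝ} (hR : 1 ≤ R) (hk : 0 ≤ k) (x : E) : 1 ≤ powWeight R k x := by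
  unfold powWeight
  split_ifs with hx
  · exact le_rfl
  · exact Real.one_le_rpow (by linarith [not_le.1 hx]) hk

theorem powWeight_le_rpow_mul {R R' k k' θ : ℝ} (hR : 1 ≤ R) (hRR' : R ≤ R') (hk : 0 ≤ k)
    (hθ : 0 ≤ θ) (hk' : k' ≤ k * θ) (x : E) :
    powWeight R' k' x ≤ powWeight R k x ^ θ * ((1 + ‖x‖) / (R' + 1)) ^ (k' - k * θ) := by
  have hR' : 0 < R' + 1 := by linarith
  have hρ : 0 < (1 + ‖x‖) / (R' + 1) := by positivity
  by_cases hx : ‖x‖ ≤ R'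
  · rw [powWeight, if_pos hx]
    refine one_le_mul_of_one_le_of_one_le (Real.one_le_rpow (one_le_powWeight hR hk x) hθ) ?_
    refine Real.one_le_rpow_of_pos_of_le_one_of_nonpos hρ ?_ (by linarith)
    rw [div_le_one hR']
    linarith
  · have hxR : R < ‖x‖ := hRR'.trans_lt (not_le.1 hx)
    have hx0 : 0 < ‖x‖ := by linarith
    rw [powWeight, powWeight, if_neg hx, if_neg hxR.not_ge, ← Real.rpow_mul hx0.le]
    calc ‖x‖ ^ k' = ‖x‖ ^ (k * θ) * ‖x‖ ^ (k' - k * θ) := by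
          rw [← Real.rpow_add hx0, add_sub_cancel]
      _ ≤ ‖x‖ ^ (k * θ) * ((1 + ‖x‖) / (R' + 1)) ^ (k' - k * θ) := by
          refine mul_le_mul_of_nonneg_left (Real.rpow_le_rpow_of_nonpos hρ ?_ (by linarith))
            (by positivity)
          rw [div_le_iff₀ hR']
          nlinarith

theorem ofReal_powWeight_le_rpow_mul {R R' k k' θ : ℝ} (hR : 1 ≤ R) (hRR' : R ≤ R')
    (hk : 0 ≤ k) (hθ : 0 ≤ θ) (hk' : k' ≤ k * θ) (x : E) :
    ENNReal.ofReal (powWeight R' k' x) ≤ ENNReal.ofReal (powWeight R k x) ^ θ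
      * ENNReal.ofReal (((1 + ‖x‖) / (R' + 1)) ^ (k' - k * θ)) := by
  have hW0 : 0 ≤ powWeight R k x := zero_le_one.trans (one_le_powWeight hR hk x)
  rw [ENNReal.ofReal_rpow_of_nonneg hW0 hθ, ← ENNReal.ofReal_mul (Real.rpow_nonneg hW0 _)]
  exact ENNReal.ofReal_le_ofReal (powWeight_le_rpow_mul hR hRR' hk hθ hk' x)

theorem measurable_powWeight [MeasurableSpace E] [OpensMeasurableSpace E] (R k : ℝ) :
    Measurable (powWeight R k : E → ℝ) :=
  Measurable.ite (measurableSet_le continuous_norm.measurable measurable_const) measurable_const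
    (continuous_norm.measurable.pow_const k)

end Weight

theorem lintegral_ofReal_one_add_norm_div_rpow_ne_top {E : Type*} [NormedAddCommGroup E]
    [NormedSpace ℝ E] [FiniteDimensional ℝ E] [MeasurableSpace E] [BorelSpace E]
    (μ : Measure E) [μ.IsAddHaarMeasure] {c r : ℝ} (hc : 0 < c)
    (hr : (Module.finrank ℝ E : ℝ) < r) :
    ∫⁻ x, ENNReal.ofReal (((1 + ‖x‖) / c) ^ (-r)) ∂μ ≠ ∞ := by
  have hcr : ∀ x : E, ((1 + ‖x‖) / c) ^ (-r) = c ^ r * (1 + ‖x‖) ^ (-r) := fun x => by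
    rw [Real.div_rpow (by positivity) hc.le, Real.rpow_neg hc.le, div_inv_eq_mul, mul_comm]
  simp_rw [hcr, ENNReal.ofReal_mul (by positivity : 0 ≤ c ^ r)]
  rw [lintegral_const_mul' _ _ ENNReal.ofReal_ne_top]
  exact ENNReal.mul_ne_top ENNReal.ofReal_ne_top (finite_integral_one_add_norm hr).ne

section Ynorm

variable (N : ℕ)

noncomputable def Yconst (n : ℕ) : ℝ≥0∞ :=
  (2 * ((N : ℝ≥0∞) * volume (Metric.ball (0 : EuclideanSpace ℝ (Fin N)) 1)) * (n : ℝ≥0∞) ^ N)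
    ^ ((1 : ℝ) / ((n : ℝ) + 1))

noncomputable def Yintegral (Ω : Set (EuclideanSpace ℝ (Fin N))) (n : ℕ)
    (f : EuclideanSpace ℝ (Fin N) → ℂ) : ℝ≥0∞ :=
  ∫⁻ x in Ω, ‖f x‖ₑ ^ (1 + 1 / (n : ℝ))
    * ENNReal.ofReal (powWeight n ((1 / (n : ℝ)) * ((N : ℝ) + 1 / (n : ℝ))) x)

theorem Ynorm_eq (Ω : Set (EuclideanSpace ℝ (Fin N))) (n : ℕ)
    (f : EuclideanSpace ℝ (Fin N) → ℂ) :
    Ynorm N Ω n f = Yconst N n * Yintegral N Ω n f ^ ((1 : ℝ) / (1 + 1 / (n : ℝ))) := by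
  have hS : MeasurableSet {x : EuclideanSpace ℝ (Fin N) | ‖x‖ ≤ (n : ℝ)} :=
    measurableSet_le continuous_norm.measurable measurable_const
  rw [Ynorm, Yconst, Yintegral, Set.inter_comm, Set.sdiff_eq_compl_inter,
    ← Measure.restrict_restrict hS, ← Measure.restrict_restrict hS.compl,
    ← lintegral_add_compl (μ := volume.restrict Ω) _ hS]
  congr 3
  · refine setLIntegral_congr_fun hS fun x hx => ?_
    have hx : ‖x‖ ≤ n := hx
    rw [powWeight, if_pos hx, ENNReal.ofReal_one, mul_one, enorm_eq_nnnorm]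
  · refine setLIntegral_congr_fun hS.compl fun x hx => ?_
    have hx : (n : ℝ) < ‖x‖ := not_le.1 hx
    rw [powWeight, if_neg hx.not_ge, ← ENNReal.ofReal_rpow_of_pos (n.cast_nonneg.trans_lt hx),
      ofReal_norm, enorm_eq_nnnorm, enorm_eq_nnnorm]

theorem Yconst_ne_zero (hN : 1 ≤ N) {n : ℕ} (hn : 1 ≤ n) : Yconst N n ≠ 0 := by
  refine (ENNReal.rpow_pos (pos_iff_ne_zero.2 ?_) ?_).ne'
  · have hball := (Metric.measure_ball_pos volume (0 : EuclideanSpace ℝ (Fin N)) one_pos).ne'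
    have hN0 : (N : ℝ≥0∞) ≠ 0 := Nat.cast_ne_zero.2 (by omega)
    have hn0 : (n : ℝ≥0∞) ≠ 0 := Nat.cast_ne_zero.2 (by omega)
    exact mul_ne_zero (mul_ne_zero two_ne_zero (mul_ne_zero hN0 hball)) (pow_ne_zero _ hn0)
  · finiteness

theorem Yconst_ne_top (n : ℕ) : Yconst N n ≠ ∞ :=
  ENNReal.rpow_ne_top_of_nonneg (by positivity) (by finiteness)

theorem exists_Yintegral_succ_rpow_le (Ω : Set (EuclideanSpace ℝ (Fin N))) {n : ℕ}
    (hn : 1 ≤ n) :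
    ∃ G : ℝ≥0∞, G ≠ ∞ ∧ ∀ f : EuclideanSpace ℝ (Fin N) → ℂ, Measurable f →
      Yintegral N Ω (n + 1) f ^ ((1 : ℝ) / (1 + 1 / ((n + 1 : ℕ) : ℝ)))
        ≤ Yintegral N Ω n f ^ ((1 : ℝ) / (1 + 1 / (n : ℝ))) * G := by
  set ν : ℝ := (n : ℝ)
  have hν : 1 ≤ ν := Nat.one_le_cast.2 hn
  set q : ℝ := 1 + 1 / ν
  set p : ℝ := 1 + 1 / (ν + 1)
  set k : ℝ := 1 / ν * (N + 1 / ν)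
  set k' : ℝ := 1 / (ν + 1) * (N + 1 / (ν + 1))
  set e : ℝ := k' - k * (p / q)
  set r : ℝ := N + 2 / ν
  have hp : 0 < p := by positivity
  have hpq : p < q := by
    have : 1 / (ν + 1) < 1 / ν := one_div_lt_one_div_of_lt (by linarith) (by linarith)
    linarith
  have ht : 0 < q / (q - p) := div_pos (by positivity) (sub_pos.2 hpq)
  have het : e * (q / (q - p)) = -r := by
    simp only [e, k, k', p, q, r]
    field_simp
    ring
  have he : e ≤ 0 := by
    have : e * (q / (q - p)) < 0 := by rw [het, neg_lt_zero]; positivity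
    exact (neg_of_mul_neg_left this ht.le).le
  set ρ : EuclideanSpace ℝ (Fin N) → ℝ := fun x => (1 + ‖x‖) / (ν + 1 + 1)
  have hρ : ∀ x, ENNReal.ofReal (ρ x ^ e) ^ (q / (q - p)) = ENNReal.ofReal (ρ x ^ (-r)) := by
    intro x
    rw [ENNReal.ofReal_rpow_of_nonneg (by positivity) ht.le,
      ← Real.rpow_mul (by positivity), het]
  have hpq' : 0 ≤ 1 / p - 1 / q := sub_nonneg.2 (one_div_le_one_div_of_le hp hpq.le)
  refine ⟨(∫⁻ x, ENNReal.ofReal (ρ x ^ (-r))) ^ (1 / p - 1 / q),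
    ENNReal.rpow_ne_top_of_nonneg hpq' ?_, fun f hf => ?_⟩
  · refine lintegral_ofReal_one_add_norm_div_rpow_ne_top volume (by positivity) ?_
    rw [finrank_euclideanSpace_fin]
    simp only [r, lt_add_iff_pos_right]
    positivity
  have hcast : ((n + 1 : ℕ) : ℝ) = ν + 1 := by push_cast; rfl
  rw [Yintegral, Yintegral, hcast]
  calc _ ≤ (∫⁻ x in Ω, ‖f x‖ₑ ^ q * ENNReal.ofReal (powWeight ν k x)) ^ (1 / q)
        * (∫⁻ x in Ω, ENNReal.ofReal (ρ x ^ e) ^ (q / (q - p))) ^ (1 / p - 1 / q) :=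
        rpow_lintegral_rpow_mul_le_of_le_rpow_mul hp hpq hf.enorm.aemeasurable
          (measurable_powWeight ν k).ennreal_ofReal.aemeasurable (by fun_prop)
          (ae_of_all _ fun x => ofReal_powWeight_le_rpow_mul hν (by linarith) (by positivity)
            (by positivity) (by linarith) x)
    _ ≤ _ := by
        simp_rw [hρ]
        exact mul_le_mul_right (ENNReal.rpow_le_rpow (setLIntegral_le_lintegral _ _) hpq') _

end Ynorm

theorem Ynorm_succ_le_general
    (N : ℕ) (hN : 1 ≤ N)
    (Ω : Set (EuclideanSpace ℝ (Fin N)))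
    (n : ℕ) (hn : 1 ≤ n) :
    ∃ C : ℝ≥0, 0 < C ∧
      ∀ f : EuclideanSpace ℝ (Fin N) → ℂ, Measurable f →
        Ynorm N Ω (n + 1) f ≤ (C : ℝ≥0∞) * Ynorm N Ω n f := by
  obtain ⟨G, hG, hYintegral⟩ := exists_Yintegral_succ_rpow_le N Ω hn
  have hc : Yconst N n ≠ 0 := Yconst_ne_zero N hN hn
  have hD : Yconst N (n + 1) * G / Yconst N n < ∞ :=
    ENNReal.div_lt_top (ENNReal.mul_ne_top (Yconst_ne_top N (n + 1)) hG) hc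
  obtain ⟨C, hDC, -⟩ := ENNReal.lt_iff_exists_nnreal_btwn.1 hD
  refine ⟨C, ENNReal.coe_pos.1 (zero_le.trans_lt hDC), fun f hf => ?_⟩
  calc Ynorm N Ω (n + 1) f
      = Yconst N (n + 1) * Yintegral N Ω (n + 1) f ^ ((1 : ℝ) / (1 + 1 / ((n + 1 : ℕ) : ℝ))) :=
        Ynorm_eq N Ω (n + 1) f
    _ ≤ Yconst N (n + 1) * (Yintegral N Ω n f ^ ((1 : ℝ) / (1 + 1 / (n : ℝ))) * G) := by
        gcongr
        exact hYintegral f hf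
    _ = Yconst N (n + 1) * G / Yconst N n * Ynorm N Ω n f := by
        rw [Ynorm_eq, ← mul_assoc (_ / _), ENNReal.div_mul_cancel hc (Yconst_ne_top N n)]
        ring
    _ ≤ C * Ynorm N Ω n f := by gcongr

/-- Continuous embedding `Y_n ↪ Y_{n+1}`: there is a constant `C = C(N,n) > 0` with
`‖f‖_{Y_{n+1}} ≤ C ‖f‖_{Y_n}` for every measurable `f : Ω → ℂ`. -/
theorem Ynorm_succ_le
    (N : ℕ) (hN : 1 ≤ N)
    (Ω : Set (EuclideanSpace ℝ (Fin N))) (hΩ : IsOpen Ω) (hΩne : Ω.Nonempty)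
    (n : ℕ) (hn : 1 ≤ n) :
    ∃ C : ℝ≥0, 0 < C ∧
      ∀ f : EuclideanSpace ℝ (Fin N) → ℂ, Measurable f →
        Ynorm N Ω (n + 1) f ≤ (C : ℝ≥0∞) * Ynorm N Ω n f :=
  Ynorm_succ_le_general N hN Ω n hn
end

section
/- Let N ≥ 1, let Ω ⊆ ℝ^N be a nonempty open set, and let f : Ω → ℂ be measurable with ∫_{Ω_1} |f(x)|² dx + ∫_{Ω∖Ω_1} |f(x)|² |x|^{N+1} dx < ∞ and ∫_Ω |f(x)| |x|^{N+1} dx < ∞ (i.e. f belongs to the space Y₀). Then lim_{n→∞} ‖f‖_{Y_n} = ∫_Ω |f(x)| dx = ‖f‖_{L¹(Ω)}. -/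
/-!
Write `ε = 1/n`. The bracket in `‖f‖_{Y_n}` is `∫_Ω |f|^{1+ε} w_n`, where `w_n = 1` on `|x| ≤ n`
and `w_n = |x|^{ε(N+ε)}` outside. For `n ≥ 1` the integrand is dominated by `(|f| + |f|²) w`, where
`w = 1` on the unit ball and `w = |x|^{N+1}` outside, and this is integrable for `f ∈ Y₀` because
`|f| ≤ 1 + |f|²` on the unit ball. Dominated convergence then sends the bracket to `‖f‖_{L¹}`,
which is finite. The outer exponent `1/(1+ε)` tends to `1`, and so does the prefactor
`(2κ_N n^N)^{1/(n+1)}`, because `log n / n → 0`.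
-/

open MeasureTheory
open scoped ENNReal

open scoped NNReal Topology
open Filter Set

namespace ENNReal

theorem rpow_le_rpow_add_rpow (a : ℝ≥0∞) {p q r : ℝ} (hrp : r ≤ p) (hpq : p ≤ q) :
    a ^ p ≤ a ^ r + a ^ q := by
  rcases le_total a 1 with ha | ha
  · exact (rpow_le_rpow_of_exponent_ge ha hrp).trans le_self_add
  · exact (rpow_le_rpow_of_exponent_le ha hpq).trans le_add_self

theorem coe_rpow_of_ne_zero_or_pos {x : ℝ≥0} {y : ℝ} (h : x ≠ 0 ∨ 0 < y) :
    ((x ^ y : ℝ≥0) : ℝ≥0∞) = (x : ℝ≥0∞) ^ y :=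
  h.elim (fun hx => coe_rpow_of_ne_zero hx y) fun hy => coe_rpow_of_nonneg x hy.le

theorem Tendsto.rpow_of_ne_top {α : Type*} {l : Filter α} {u : α → ℝ≥0∞} {v : α → ℝ}
    {x : ℝ≥0∞} {y : ℝ} (hu : Tendsto u l (𝓝 x)) (hv : Tendsto v l (𝓝 y)) (hx : x ≠ ∞)
    (h : x ≠ 0 ∨ 0 < y) : Tendsto (fun i => u i ^ v i) l (𝓝 (x ^ y)) := by
  lift x to ℝ≥0 using hx
  have hu' : Tendsto (fun i => (u i).toNNReal) l (𝓝 x) := (tendsto_toNNReal coe_ne_top).comp hu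
  have hev : ∀ᶠ i in l, u i ≠ ∞ ∧ ((u i).toNNReal ≠ 0 ∨ 0 < v i) := by
    refine (hu.eventually (gt_mem_nhds coe_lt_top)).mono (fun _ hi => hi.ne) |>.and ?_
    rcases h with hx | hy
    · exact (hu'.eventually_ne (by exact_mod_cast hx)).mono fun _ => Or.inl
    · exact (hv.eventually (eventually_gt_nhds hy)).mono fun _ => Or.inr
  rw [← coe_rpow_of_ne_zero_or_pos (by exact_mod_cast h)]
  refine (tendsto_coe.2 (hu'.nnrpow hv (by exact_mod_cast h))).congr' ?_
  filter_upwards [hev] with i ⟨hfin, hi⟩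
  rw [coe_rpow_of_ne_zero_or_pos hi, coe_toNNReal hfin]

theorem tendsto_natCast_pow_rpow_one_div_add_one (N : ℕ) :
    Tendsto (fun n : ℕ => ((n : ℝ≥0∞) ^ N) ^ ((1 : ℝ) / (n + 1))) atTop (𝓝 1) := by
  have hreal : Tendsto (fun n : ℕ => (n : ℝ) ^ ((N : ℝ) / (1 * n + 1))) atTop (𝓝 1) :=
    (tendsto_rpow_div_mul_add N 1 1 one_ne_zero.symm).comp tendsto_natCast_atTop_atTop
  rw [← ofReal_one]
  refine (tendsto_ofReal hreal).congr fun n => ?_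
  rw [← ofReal_natCast, ← ofReal_pow n.cast_nonneg, ofReal_rpow_of_nonneg (by positivity)
    (by positivity), ← Real.rpow_natCast, ← Real.rpow_mul n.cast_nonneg, one_mul, mul_one_div]

theorem tendsto_mul_natCast_pow_rpow_one_div_add_one {c : ℝ≥0∞} (hc₀ : c ≠ 0) (hc : c ≠ ∞)
    (N : ℕ) :
    Tendsto (fun n : ℕ => (c * (n : ℝ≥0∞) ^ N) ^ ((1 : ℝ) / (n + 1))) atTop (𝓝 1) := by
  have hexp : Tendsto (fun n : ℕ => (1 : ℝ) / (n + 1)) atTop (𝓝 0) :=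
    tendsto_one_div_add_atTop_nhds_zero_nat
  have hc' : Tendsto (fun n : ℕ => c ^ ((1 : ℝ) / (n + 1))) atTop (𝓝 1) := by
    simpa using Tendsto.rpow_of_ne_top tendsto_const_nhds hexp hc (Or.inl hc₀)
  have := ENNReal.Tendsto.mul hc' (Or.inr one_ne_top) (tendsto_natCast_pow_rpow_one_div_add_one N)
    (Or.inr one_ne_top)
  rw [one_mul] at this
  refine this.congr fun n => (mul_rpow_of_nonneg _ _ (by positivity)).symm

end ENNReal

section TailWeight

variable {E : Type*} [SeminormedAddCommGroup E]

/-- `tailWeight (ε * (N + ε)) n` is the weight of `Y_n` (with `ε = 1/n`) and `tailWeight (N + 1) 1`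
that of `Y₀`. -/
noncomputable def tailWeight (s r : ℝ) (x : E) : ℝ≥0∞ :=
  if ‖x‖ ≤ r then 1 else (‖x‖₊ : ℝ≥0∞) ^ s

theorem one_le_tailWeight {s r : ℝ} (hs : 0 ≤ s) (hr : 1 ≤ r) (x : E) :
    1 ≤ tailWeight s r x := by
  unfold tailWeight
  split_ifs with hx
  · exact le_rfl
  · have h1x : (1 : ℝ≥0∞) ≤ ‖x‖₊ := by exact_mod_cast hr.trans (not_le.1 hx).le
    simpa using ENNReal.rpow_le_rpow h1x hs

theorem tailWeight_le_tailWeight_one {q s r : ℝ} (hqs : q ≤ s) (hs : 0 ≤ s) (hr : 1 ≤ r)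
    (x : E) : tailWeight q r x ≤ tailWeight s 1 x := by
  by_cases hxr : ‖x‖ ≤ r
  · rw [tailWeight, if_pos hxr]
    exact one_le_tailWeight hs le_rfl x
  · have hx : 1 < ‖x‖ := hr.trans_lt (not_le.1 hxr)
    rw [tailWeight, tailWeight, if_neg hxr, if_neg (not_le.2 hx)]
    exact ENNReal.rpow_le_rpow_of_exponent_le (by exact_mod_cast hx.le) hqs

theorem tailWeight_of_norm_le {s r : ℝ} {x : E} (hx : ‖x‖ ≤ r) : tailWeight s r x = 1 :=
  if_pos hx

variable [MeasurableSpace E] {μ : Measure E}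

theorem lintegral_le_lintegral_mul_tailWeight (a : E → ℝ≥0∞) {s r : ℝ} (hs : 0 ≤ s)
    (hr : 1 ≤ r) : ∫⁻ x, a x ∂μ ≤ ∫⁻ x, a x * tailWeight s r x ∂μ :=
  lintegral_mono fun x => le_mul_of_one_le_right' (one_le_tailWeight hs hr x)

variable [OpensMeasurableSpace E]

theorem measurable_tailWeight (s r : ℝ) : Measurable (tailWeight s r : E → ℝ≥0∞) :=
  Measurable.ite (measurableSet_le continuous_norm.measurable measurable_const) measurable_const
    (by fun_prop)

theorem setLIntegral_mul_tailWeight (a : E → ℝ≥0∞) (s r : ℝ) (t : Set E) :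
    ∫⁻ x in t, a x * tailWeight s r x ∂μ =
      ∫⁻ x in t ∩ {x | ‖x‖ ≤ r}, a x ∂μ
        + ∫⁻ x in t \ {x | ‖x‖ ≤ r}, a x * (‖x‖₊ : ℝ≥0∞) ^ s ∂μ := by
  have hS : MeasurableSet {x : E | ‖x‖ ≤ r} :=
    measurableSet_le continuous_norm.measurable measurable_const
  rw [← lintegral_inter_add_sdiff _ t hS, sdiff_eq, inter_comm t, inter_comm t,
    ← Measure.restrict_restrict hS, ← Measure.restrict_restrict hS.compl]
  congr 1
  · exact setLIntegral_congr_fun hS fun x hx => by rw [tailWeight_of_norm_le hx, mul_one]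
  · exact setLIntegral_congr_fun hS.compl fun x hx => by
      rw [tailWeight, if_neg (show ¬‖x‖ ≤ r from hx)]

theorem lintegral_mul_tailWeight_ne_top {a : E → ℝ≥0∞} (ha : Measurable a) {s : ℝ}
    (hball : μ (Metric.closedBall 0 1) ≠ ∞)
    (h₂ : ∫⁻ x, a x ^ (2 : ℝ) * tailWeight s 1 x ∂μ ≠ ∞)
    (h₁ : ∫⁻ x, a x * (‖x‖₊ : ℝ≥0∞) ^ s ∂μ ≠ ∞) :
    ∫⁻ x, a x * tailWeight s 1 x ∂μ ≠ ∞ := by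
  have hle : ∀ x, a x * tailWeight s 1 x ≤ (Metric.closedBall (0 : E) 1).indicator 1 x
      + (a x ^ (2 : ℝ) * tailWeight s 1 x + a x * (‖x‖₊ : ℝ≥0∞) ^ s) := by
    intro x
    by_cases hx : ‖x‖ ≤ 1
    · rw [tailWeight_of_norm_le hx, mul_one, mul_one,
        indicator_of_mem (mem_closedBall_zero_iff.2 hx), Pi.one_apply]
      calc a x = a x ^ (1 : ℝ) := (ENNReal.rpow_one _).symm
        _ ≤ a x ^ (0 : ℝ) + a x ^ (2 : ℝ) :=
          ENNReal.rpow_le_rpow_add_rpow _ zero_le_one one_le_two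
        _ ≤ 1 + (a x ^ (2 : ℝ) + a x * (‖x‖₊ : ℝ≥0∞) ^ s) := by
          rw [ENNReal.rpow_zero]
          gcongr
          exact le_self_add
    · rw [tailWeight, if_neg hx]
      exact le_add_self.trans le_add_self
  refine ne_top_of_le_ne_top ?_ (lintegral_mono hle)
  have hm : Measurable fun x => a x ^ (2 : ℝ) * tailWeight s 1 x :=
    (ha.pow_const _).mul (measurable_tailWeight s 1)
  rw [lintegral_add_left (measurable_one.indicator Metric.isClosed_closedBall.measurableSet),
    lintegral_add_left hm,
    lintegral_indicator_one Metric.isClosed_closedBall.measurableSet]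
  exact ENNReal.add_ne_top.2 ⟨hball, ENNReal.add_ne_top.2 ⟨h₂, h₁⟩⟩

theorem tendsto_lintegral_rpow_mul_tailWeight {ι : Type*} {l : Filter ι} [l.IsCountablyGenerated]
    {a : E → ℝ≥0∞} (ha : Measurable a) {p q r : ι → ℝ} {s : ℝ} (hs : 0 ≤ s)
    (hp : Tendsto p l (𝓝 1)) (hp₁ : ∀ᶠ i in l, 1 ≤ p i) (hq : ∀ᶠ i in l, q i ≤ s)
    (hr : Tendsto r l atTop) (h₁ : ∫⁻ x, a x * tailWeight s 1 x ∂μ ≠ ∞)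
    (h₂ : ∫⁻ x, a x ^ (2 : ℝ) * tailWeight s 1 x ∂μ ≠ ∞) :
    Tendsto (fun i => ∫⁻ x, a x ^ p i * tailWeight (q i) (r i) x ∂μ) l (𝓝 (∫⁻ x, a x ∂μ)) := by
  refine tendsto_lintegral_filter_of_dominated_convergence
    (fun x => (a x + a x ^ (2 : ℝ)) * tailWeight s 1 x)
    (Eventually.of_forall fun i => (ha.pow_const _).mul (measurable_tailWeight _ _)) ?_ ?_ ?_
  · filter_upwards [hp₁, hp.eventually (eventually_le_nhds one_lt_two), hq,
      hr.eventually_ge_atTop 1] with i hp₁ hp₂ hq hr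
    exact ae_of_all _ fun x => mul_le_mul'
      (((a x).rpow_le_rpow_add_rpow hp₁ hp₂).trans_eq (by rw [ENNReal.rpow_one]))
      (tailWeight_le_tailWeight_one hq hs hr x)
  · simp only [add_mul]
    rw [lintegral_add_left (f := fun x => a x * tailWeight s 1 x)
      (ha.mul (measurable_tailWeight s 1))]
    exact ENNReal.add_ne_top.2 ⟨h₁, h₂⟩
  · have hfin := ne_top_of_le_ne_top h₁ (lintegral_le_lintegral_mul_tailWeight a hs le_rfl)
    filter_upwards [ae_lt_top ha hfin] with x hx
    have hlim := ENNReal.Tendsto.rpow_of_ne_top tendsto_const_nhds hp hx.ne (Or.inr one_pos)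
    rw [ENNReal.rpow_one] at hlim
    refine hlim.congr' ?_
    filter_upwards [hr.eventually_ge_atTop ‖x‖] with i hi
    rw [tailWeight_of_norm_le hi, mul_one]

theorem tendsto_lintegral_rpow_one_add_inv_mul_tailWeight {a : E → ℝ≥0∞} (ha : Measurable a)
    {s : ℝ} (hs : 0 ≤ s) (h₁ : ∫⁻ x, a x * tailWeight (s + 1) 1 x ∂μ ≠ ∞)
    (h₂ : ∫⁻ x, a x ^ (2 : ℝ) * tailWeight (s + 1) 1 x ∂μ ≠ ∞) :
    Tendsto (fun n : ℕ => ∫⁻ x, a x ^ (1 + 1 / (n : ℝ)) * tailWeight (1 / n * (s + 1 / n)) n x ∂μ)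
      atTop (𝓝 (∫⁻ x, a x ∂μ)) := by
  have hε : Tendsto (fun n : ℕ => 1 + 1 / (n : ℝ)) atTop (𝓝 1) := by
    simpa using tendsto_one_div_atTop_nhds_zero_nat.const_add (1 : ℝ)
  have hq : ∀ᶠ n : ℕ in atTop, 1 / (n : ℝ) * (s + 1 / n) ≤ s + 1 := by
    filter_upwards [eventually_ge_atTop 1] with n hn
    have hn₁ : 1 / (n : ℝ) ≤ 1 := by
      rw [div_le_one (by positivity)]
      exact_mod_cast hn
    have hn₀ : 0 ≤ 1 / (n : ℝ) := by positivity
    nlinarith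
  exact tendsto_lintegral_rpow_mul_tailWeight ha (by positivity) hε
    (Eventually.of_forall fun n => le_add_of_nonneg_right (by positivity)) hq
    tendsto_natCast_atTop_atTop h₁ h₂

end TailWeight

theorem Ynorm_tendsto_L1norm_general
    (N : ℕ) (hN : 1 ≤ N)
    (Ω : Set (EuclideanSpace ℝ (Fin N)))
    (f : EuclideanSpace ℝ (Fin N) → ℂ) (hf : Measurable f)
    (hY1 : (∫⁻ x in Ω ∩ {x | ‖x‖ ≤ (1 : ℝ)}, (‖f x‖₊ : ℝ≥0∞) ^ (2 : ℝ) ∂volume)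
        + (∫⁻ x in Ω \ {x | ‖x‖ ≤ (1 : ℝ)},
            (‖f x‖₊ : ℝ≥0∞) ^ (2 : ℝ) * (‖x‖₊ : ℝ≥0∞) ^ ((N : ℝ) + 1) ∂volume) < ⊤)
    (hY0 : (∫⁻ x in Ω, (‖f x‖₊ : ℝ≥0∞) * (‖x‖₊ : ℝ≥0∞) ^ ((N : ℝ) + 1) ∂volume) < ⊤) :
    Filter.Tendsto (fun n : ℕ => Ynorm N Ω n f) Filter.atTop
      (nhds (∫⁻ x in Ω, (‖f x‖₊ : ℝ≥0∞) ∂volume)) := by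
  have ha : Measurable fun x => (‖f x‖₊ : ℝ≥0∞) := hf.nnnorm.coe_nnreal_ennreal
  have h₂ : ∫⁻ x in Ω, (‖f x‖₊ : ℝ≥0∞) ^ (2 : ℝ) * tailWeight ((N : ℝ) + 1) 1 x ≠ ∞ := by
    rw [setLIntegral_mul_tailWeight]
    exact hY1.ne
  have h₁ : ∫⁻ x in Ω, (‖f x‖₊ : ℝ≥0∞) * tailWeight ((N : ℝ) + 1) 1 x ≠ ∞ :=
    lintegral_mul_tailWeight_ne_top ha
      ((Measure.restrict_apply_le _ _).trans_lt measure_closedBall_lt_top).ne h₂ hY0.ne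
  have hL : ∫⁻ x in Ω, (‖f x‖₊ : ℝ≥0∞) ≠ ∞ :=
    ne_top_of_le_ne_top h₁ (lintegral_le_lintegral_mul_tailWeight _ (by positivity) le_rfl)
  have hc₀ : 2 * ((N : ℝ≥0∞) * volume (Metric.ball (0 : EuclideanSpace ℝ (Fin N)) 1)) ≠ 0 := by
    simp [(Metric.measure_ball_pos volume _ one_pos).ne']
    omega
  have hc : 2 * ((N : ℝ≥0∞) * volume (Metric.ball (0 : EuclideanSpace ℝ (Fin N)) 1)) ≠ ∞ := by
    simp [ENNReal.mul_eq_top, measure_ball_lt_top.ne]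
  have hδ : Tendsto (fun n : ℕ => 1 / (1 + 1 / (n : ℝ))) atTop (𝓝 1) := by
    simpa using (tendsto_one_div_atTop_nhds_zero_nat.const_add (1 : ℝ)).inv₀ (by norm_num)
  have hlim := ENNReal.Tendsto.mul (ENNReal.tendsto_mul_natCast_pow_rpow_one_div_add_one hc₀ hc N)
    (Or.inl one_ne_zero) (ENNReal.Tendsto.rpow_of_ne_top
      (tendsto_lintegral_rpow_one_add_inv_mul_tailWeight ha (Nat.cast_nonneg N) h₁ h₂) hδ hL
      (Or.inr one_pos))
    (Or.inr ENNReal.one_ne_top)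
  simp only [Ynorm, ← setLIntegral_mul_tailWeight]
  simpa using hlim

/-- Convergence of the `Y_n`-norms to the `L¹`-norm: if `f ∈ Y₀`, i.e.
`∫_{Ω₁} |f|² + ∫_{Ω∖Ω₁} |f|² |x|^{N+1} < ∞` and `∫_Ω |f| |x|^{N+1} < ∞`, then
`‖f‖_{Y_n} → ‖f‖_{L¹(Ω)}` as `n → ∞`. -/
theorem Ynorm_tendsto_L1norm
    (N : ℕ) (hN : 1 ≤ N)
    (Ω : Set (EuclideanSpace ℝ (Fin N))) (hΩ : IsOpen Ω) (hΩne : Ω.Nonempty)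
    (f : EuclideanSpace ℝ (Fin N) → ℂ) (hf : Measurable f)
    (hY1 : (∫⁻ x in Ω ∩ {x | ‖x‖ ≤ (1 : ℝ)}, (‖f x‖₊ : ℝ≥0∞) ^ (2 : ℝ) ∂volume)
        + (∫⁻ x in Ω \ {x | ‖x‖ ≤ (1 : ℝ)},
            (‖f x‖₊ : ℝ≥0∞) ^ (2 : ℝ) * (‖x‖₊ : ℝ≥0∞) ^ ((N : ℝ) + 1) ∂volume) < ⊤)
    (hY0 : (∫⁻ x in Ω, (‖f x‖₊ : ℝ≥0∞) * (‖x‖₊ : ℝ≥0∞) ^ ((N : ℝ) + 1) ∂volume) < ⊤) :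
    Filter.Tendsto (fun n : ℕ => Ynorm N Ω n f) Filter.atTop
      (nhds (∫⁻ x in Ω, (‖f x‖₊ : ℝ≥0∞) ∂volume)) :=
  Ynorm_tendsto_L1norm_general N hN Ω f hf hY1 hY0
end

section
/- Let Ω ⊆ ℝ^N be a nonempty open set and regard L²(Ω;ℂ) as a real Hilbert space with inner product (u,v) = Re ∫_Ω u·conj(v) dx. Let X be a real Banach space, j : X → L²(Ω;ℂ) an injective continuous real-linear map with dense range, X⋆ the continuous real dual of X, and e : L²(Ω;ℂ) → X⋆ the continuous linear map e(w)(φ) = Re ∫_Ω w · conj(j(φ)) dx. Let I ⊆ ℝ be an interval, let u : I → X be strongly measurable with ess sup_{t∈I} ‖u(t)‖_X < ∞, and let v : I → X⋆ be Bochner integrable on I, such that e(j(u(t))) − e(j(u(s))) = ∫_s^t v(σ) dσ in X⋆ for all s, t ∈ I. Then t ↦ j(u(t)) agrees almost everywhere on I with a bounded continuous function w : I → L²(Ω;ℂ), and for all t ∈ I, ‖w(t)‖²_{L²(Ω)} ≤ ess sup_{s∈I} ‖u(s)‖_X · ( ess sup_{s∈I} ‖e(j(u(s)))‖_{X⋆}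 + ∫_I ‖v(σ)‖_{X⋆} dσ ). -/
/-!
Since `e (j x) x = ‖j x‖²`, applying this to `x = u s - u t` and using the hypothesis on
`e ∘ j ∘ u` gives `‖j (u s) - j (u t)‖² ≤ 2 Mu ∫_{Ι s t} ‖v‖` for `s, t` in the full-measure
subset of `I` where the two bounds hold. By absolute continuity of the integral, `j ∘ u` is
uniformly continuous on that subset, which is dense in `I`; its continuous extension to `I` is the
required `w`, and the bound `‖j (u s)‖² ≤ ‖e (j (u s))‖ ‖u s‖ ≤ Me Mu` passes to the closure.
-/

open MeasureTheory Filter Set Topology intervalIntegral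
open scoped Uniformity Interval

theorem UniformContinuousOn.continuousOn_extendFrom {α β : Type*} [UniformSpace α]
    [UniformSpace β] [CompleteSpace β] {f : α → β} {S : Set α} (hf : UniformContinuousOn f S) :
    ContinuousOn (extendFrom S f) (closure S) := by
  refine _root_.continuousOn_extendFrom subset_rfl fun x hx ↦ ?_
  have := mem_closure_iff_nhdsWithin_neBot.1 hx
  exact CompleteSpace.complete ((cauchy_nhds.mono nhdsWithin_le_nhds).map_of_le hf inf_le_right)

theorem ContinuousOn.mapsTo_of_subset_closure {α β : Type*} [TopologicalSpace α]
    [TopologicalSpace β] {f : α → β} {S I : Set α} {C : Set β} (hf : ContinuousOn f I)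
    (hSI : S ⊆ I) (hIS : I ⊆ closure S) (hC : IsClosed C) (h : MapsTo f S C) : MapsTo f I C :=
  fun _ ht ↦ hC.closure_subset (((hf _ ht).mono hSI).mem_closure (hIS ht) h)

theorem uniformContinuousOn_of_dist_le {α β : Type*} [UniformSpace α] [PseudoMetricSpace β]
    {f : α → β} {S : Set α} {ω : α × α → ℝ} (hω : Tendsto ω (𝓤 α) (𝓝 0))
    (h : ∀ p ∈ S, ∀ q ∈ S, dist (f p) (f q) ≤ ω (p, q)) : UniformContinuousOn f S := by
  refine tendsto_uniformity_iff_dist_tendsto_zero.2 <|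
    squeeze_zero' (Eventually.of_forall fun _ ↦ dist_nonneg) ?_ (hω.mono_left inf_le_left)
  filter_upwards [mem_inf_of_right (mem_principal_self _)] with p hp
  exact h p.1 hp.1 p.2 hp.2

theorem IsOpen.subset_closure_of_ae_restrict {X : Type*} [TopologicalSpace X] [MeasurableSpace X]
    [OpensMeasurableSpace X] {μ : Measure X} [μ.IsOpenPosMeasure] {U S : Set X} (hU : IsOpen U)
    (h : ∀ᵐ x ∂μ.restrict U, x ∈ S) : U ⊆ closure S := by
  rw [ae_restrict_iff' hU.measurableSet, ae_iff] at h
  have hnull : μ (U ∩ interior Sᶜ) = 0 := by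
    refine measure_mono_null ?_ h
    rintro x ⟨hxU, hxS⟩ hx
    exact interior_subset hxS (hx hxU)
  intro x hxU
  rw [closure_eq_compl_interior_compl]
  exact fun hx ↦
    ((hU.inter isOpen_interior).eq_empty_of_measure_zero hnull).subset (mem_inter hxU hx)

theorem Set.OrdConnected.subset_closure_interior {I : Set ℝ} (hI : I.OrdConnected)
    (hI' : I.Nontrivial) : I ⊆ closure (interior I) := by
  obtain ⟨a, ha, b, hb, hab⟩ := hI'.exists_lt
  have hint : (interior I).Nonempty := (nonempty_Ioo.2 hab).mono <|
    isOpen_Ioo.subset_interior_iff.2 (Ioo_subset_Icc_self.trans (hI.out ha hb))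
  rw [(hI.convex (𝕜 := ℝ)).closure_interior_eq_closure_of_nonempty_interior hint]
  exact subset_closure

theorem Set.OrdConnected.subset_closure_of_ae_restrict {I S : Set ℝ} (hI : I.OrdConnected)
    (hI' : I.Nontrivial) (h : ∀ᵐ x ∂volume.restrict I, x ∈ S) : I ⊆ closure S :=
  (hI.subset_closure_interior hI').trans <| closure_minimal
    (isOpen_interior.subset_closure_of_ae_restrict
      (ae_restrict_of_ae_restrict_of_subset interior_subset h))
    isClosed_closure

theorem MeasureTheory.IntegrableOn.tendsto_setIntegral_uIoc_uniformity {E : Type*}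
    [NormedAddCommGroup E] [NormedSpace ℝ E] {g : ℝ → E} {I : Set ℝ} (hg : IntegrableOn g I) :
    Tendsto (fun p : ℝ × ℝ ↦ ∫ x in Ι p.1 p.2, g x ∂volume.restrict I) (𝓤 ℝ) (𝓝 0) := by
  refine Integrable.tendsto_setIntegral_nhds_zero hg ?_
  have hdist : Tendsto (fun p : ℝ × ℝ ↦ ENNReal.ofReal (dist p.1 p.2)) (𝓤 ℝ) (𝓝 0) := by
    simpa using (ENNReal.tendsto_ofReal (tendsto_uniformity_iff_dist_tendsto_zero.1 tendsto_id))
  refine tendsto_of_tendsto_of_tendsto_of_le_of_le tendsto_const_nhds hdist (fun _ ↦ zero_le)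
    fun p ↦ ?_
  calc volume.restrict I (Ι p.1 p.2) ≤ volume (Ι p.1 p.2) := Measure.restrict_apply_le _ _
    _ = ENNReal.ofReal (dist p.1 p.2) := by rw [Real.volume_uIoc, Real.dist_eq, abs_sub_comm]

theorem MeasureTheory.L2.integral_mul_conj_eq_inner {α : Type*} [MeasurableSpace α]
    {μ : Measure α} (f g : Lp ℂ 2 μ) :
    ∫ x, (f : α → ℂ) x * (starRingEnd ℂ) ((g : α → ℂ) x) ∂μ = inner ℂ g f := by
  rw [L2.inner_def]
  rfl

section GelfandTriple

variable {X H : Type*} [NormedAddCommGroup X] [NormedSpace ℝ X] [SeminormedAddCommGroup H]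
  [NormedSpace ℝ H] {j : X →L[ℝ] H} {e : H →L[ℝ] X →L[ℝ] ℝ}

theorem sq_norm_le_of_apply_self_eq (he : ∀ x, e (j x) x = ‖j x‖ ^ 2) (x : X) :
    ‖j x‖ ^ 2 ≤ ‖e (j x)‖ * ‖x‖ := by
  rw [← he]
  exact (Real.le_norm_self _).trans ((e (j x)).le_opNorm x)

theorem sq_dist_le_of_sub_eq_intervalIntegral (he : ∀ x, e (j x) x = ‖j x‖ ^ 2) {u : ℝ → X}
    {v : ℝ → X →L[ℝ] ℝ} {M p q : ℝ} (hp : ‖u p‖ ≤ M) (hq : ‖u q‖ ≤ M)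
    (hpq : e (j (u p)) - e (j (u q)) = ∫ σ in q..p, v σ) :
    dist (j (u p)) (j (u q)) ^ 2 ≤ 2 * M * ∫ σ in Ι p q, ‖v σ‖ :=
  calc dist (j (u p)) (j (u q)) ^ 2 = ‖j (u p - u q)‖ ^ 2 := by rw [dist_eq_norm, map_sub]
    _ ≤ ‖e (j (u p - u q))‖ * ‖u p - u q‖ := sq_norm_le_of_apply_self_eq he _
    _ ≤ (∫ σ in Ι p q, ‖v σ‖) * (2 * M) := by
      rw [map_sub, map_sub, hpq, uIoc_comm]
      gcongr
      · exact norm_integral_le_integral_norm_uIoc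
      · exact (norm_sub_le _ _).trans (by linarith)
    _ = 2 * M * ∫ σ in Ι p q, ‖v σ‖ := mul_comm _ _

end GelfandTriple

theorem Linf_W11_embeds_in_Cb_L2_general
    (N : ℕ) (Ω : Set (EuclideanSpace ℝ (Fin N)))
    (X : Type*) [NormedAddCommGroup X] [NormedSpace ℝ X]
    (j : X →L[ℝ] Lp ℂ 2 (volume.restrict Ω))
    (e : Lp ℂ 2 (volume.restrict Ω) →L[ℝ] (X →L[ℝ] ℝ))
    (he : ∀ (w : Lp ℂ 2 (volume.restrict Ω)) (φ : X),
      e w φ = (∫ x, (w : EuclideanSpace ℝ (Fin N) → ℂ) x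
        * (starRingEnd ℂ) ((j φ : EuclideanSpace ℝ (Fin N) → ℂ) x) ∂(volume.restrict Ω)).re)
    (I : Set ℝ) (hI : I.OrdConnected)
    (u : ℝ → X)
    (Mu Me : ℝ) (hMu0 : 0 ≤ Mu) (hMe0 : 0 ≤ Me)
    (hMu : ∀ᵐ t ∂(volume.restrict I), ‖u t‖ ≤ Mu)
    (hMe : ∀ᵐ t ∂(volume.restrict I), ‖e (j (u t))‖ ≤ Me)
    (v : ℝ → X →L[ℝ] ℝ) (hv : IntegrableOn v I volume)
    (hid : ∀ s ∈ I, ∀ t ∈ I, e (j (u t)) - e (j (u s)) = ∫ σ in s..t, v σ) :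
    ∃ w : ℝ → Lp ℂ 2 (volume.restrict Ω),
      ContinuousOn w I ∧
      (∀ᵐ t ∂(volume.restrict I), w t = j (u t)) ∧
      ∀ t ∈ I, ‖w t‖ ^ 2 ≤ Mu * (Me + ∫ σ in I, ‖v σ‖) := by
  have hRHS : Mu * Me ≤ Mu * (Me + ∫ σ in I, ‖v σ‖) :=
    mul_le_mul_of_nonneg_left (le_add_of_nonneg_right (integral_nonneg fun _ ↦ norm_nonneg _)) hMu0
  rcases I.subsingleton_or_nontrivial with hIs | hInt
  · refine ⟨0, continuousOn_const, ?_, fun _ _ ↦ ?_⟩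
    · simp [Measure.restrict_eq_zero.2 (hIs.measure_zero volume)]
    · simpa using (mul_nonneg hMu0 hMe0).trans hRHS
  have hsq : ∀ x, e (j x) x = ‖j x‖ ^ 2 := fun x ↦ by
    rw [he, L2.integral_mul_conj_eq_inner, ← inner_self_eq_norm_sq (𝕜 := ℂ)]
    rfl
  set S := {t | t ∈ I ∧ ‖u t‖ ≤ Mu ∧ ‖e (j (u t))‖ ≤ Me}
  have hS : ∀ᵐ t ∂volume.restrict I, t ∈ S := by
    filter_upwards [ae_restrict_mem hI.measurableSet, hMu, hMe] with t ht hut het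
    exact ⟨ht, hut, het⟩
  have hf : UniformContinuousOn (fun t ↦ j (u t)) S := by
    refine uniformContinuousOn_of_dist_le
      (ω := fun p ↦ √(2 * Mu * ∫ σ in Ι p.1 p.2, ‖v σ‖ ∂volume.restrict I))
      (by simpa using
        ((IntegrableOn.tendsto_setIntegral_uIoc_uniformity hv.norm).const_mul (2 * Mu)).sqrt)
      fun p hp q hq ↦ ?_
    rw [Measure.restrict_restrict_of_subset (uIoc_subset_uIcc.trans (hI.uIcc_subset hp.1 hq.1))]
    exact Real.le_sqrt_of_sq_le <| sq_dist_le_of_sub_eq_intervalIntegral hsq hp.2.1 hq.2.1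
      (hid q hq.1 p hp.1)
  have hIS := hI.subset_closure_of_ae_restrict hInt hS
  have hw := hf.continuousOn_extendFrom.mono hIS
  refine ⟨extendFrom S fun t ↦ j (u t), hw, ?_, fun t ht ↦ ?_⟩
  · filter_upwards [hS] with t ht using extendFrom_extends hf.continuousOn t ht
  · refine (hw.mapsTo_of_subset_closure (C := {y | ‖y‖ ^ 2 ≤ Mu * Me}) (fun s hs ↦ hs.1) hIS
      (isClosed_le (by fun_prop) continuous_const) (fun s hs ↦ ?_) ht).trans hRHS
    rw [mem_ofPred_eq, extendFrom_extends hf.continuousOn s hs, mul_comm]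
    exact (sq_norm_le_of_apply_self_eq hsq _).trans (mul_le_mul hs.2.2 hs.2.1 (norm_nonneg _) hMe0)

/-- Continuous embedding `L^∞(I;X) ∩ W^{1,1}(I;X⋆) ↪ C_b(I;L²(Ω))`, where
`X ↪ L²(Ω;ℂ) ↪ X⋆` via a dense continuous injection `j` and the map `e`
(`e(w)(φ) = Re ∫_Ω w·conj(jφ)`): if `u` is essentially bounded in `X` and its weak
derivative `v` (through the embedding) is Bochner integrable, then `j∘u` has a
bounded continuous representative `w` in `L²(Ω;ℂ)` with
`‖w(t)‖² ≤ ess sup ‖u‖_X · (ess sup ‖e(j(u))‖_{X⋆} + ∫_I ‖v‖_{X⋆})` for all `t ∈ I`. -/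
theorem Linf_W11_embeds_in_Cb_L2
    (N : ℕ) (Ω : Set (EuclideanSpace ℝ (Fin N))) (hΩ : IsOpen Ω) (hΩne : Ω.Nonempty)
    (X : Type*) [NormedAddCommGroup X] [NormedSpace ℝ X]
    (j : X →L[ℝ] Lp ℂ 2 (volume.restrict Ω))
    (hjinj : Function.Injective j) (hjdense : DenseRange j)
    (e : Lp ℂ 2 (volume.restrict Ω) →L[ℝ] (X →L[ℝ] ℝ))
    (he : ∀ (w : Lp ℂ 2 (volume.restrict Ω)) (φ : X),
      e w φ = (∫ x, (w : EuclideanSpace ℝ (Fin N) → ℂ) x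
        * (starRingEnd ℂ) ((j φ : EuclideanSpace ℝ (Fin N) → ℂ) x) ∂(volume.restrict Ω)).re)
    (I : Set ℝ) (hI : I.OrdConnected)
    (u : ℝ → X) (hu : AEStronglyMeasurable u (volume.restrict I))
    (Mu Me : ℝ) (hMu0 : 0 ≤ Mu) (hMe0 : 0 ≤ Me)
    (hMu : ∀ᵐ t ∂(volume.restrict I), ‖u t‖ ≤ Mu)
    (hMe : ∀ᵐ t ∂(volume.restrict I), ‖e (j (u t))‖ ≤ Me)
    (v : ℝ → X →L[ℝ] ℝ) (hv : IntegrableOn v I volume)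
    (hid : ∀ s ∈ I, ∀ t ∈ I, e (j (u t)) - e (j (u s)) = ∫ σ in s..t, v σ) :
    ∃ w : ℝ → Lp ℂ 2 (volume.restrict Ω),
      ContinuousOn w I ∧
      (∀ᵐ t ∂(volume.restrict I), w t = j (u t)) ∧
      ∀ t ∈ I, ‖w t‖ ^ 2 ≤ Mu * (Me + ∫ σ in I, ‖v σ‖) :=
  Linf_W11_embeds_in_Cb_L2_general N Ω X j e he I hI u Mu Me hMu0 hMe0 hMu hMe v hv hid
end

section
/- Let Ω ⊆ ℝ^N be a nonempty open set, let (ε_n) be a sequence of positive reals converging to 0, let u_n : Ω → ℂ be measurable functions converging almost everywhere on Ω to a function u, and let U : Ω → ℂ be measurable with |U(x)| ≤ 1 for almost every x ∈ Ω. Assume that for every Lebesgue integrable h : Ω → ℂ one has ∫_Ω ( u_n(x)/(|u_n(x)|² + ε_n)^{1/2} ) · conj(h(x)) dx → ∫_Ω U(x) · conj(h(x)) dx as n → ∞. Then U(x) = u(x)/|u(x)| for almost every x ∈ Ω with u(x) ≠ 0. -/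
/-!
On `{u ≠ 0}` the regularized sections `uₙ / (|uₙ|² + εₙ)^{1/2}` converge a.e. to `u / |u|`,
and they are bounded by `1`. Testing the weak★ convergence against indicators of sets of finite
measure and passing to the limit by dominated convergence shows that `U` and `u / |u|` have the
same integral over every such subset of `{u ≠ 0}`, hence agree a.e. there.
-/

open MeasureTheory Filter Topology Complex
open scoped ENNReal

section WeakLimit

variable {α E : Type*} [MeasurableSpace α] {μ : Measure α}
  [NormedAddCommGroup E] [NormedSpace ℝ E]

theorem tendsto_setIntegral_of_tendsto_ae_of_norm_le_const {f : ℕ → α → E} {g : α → E}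
    {C : ℝ} (hf : ∀ n, AEStronglyMeasurable (f n) μ) (hfC : ∀ n, ∀ᵐ x ∂μ, ‖f n x‖ ≤ C)
    (hfg : ∀ᵐ x ∂μ, Tendsto (fun n => f n x) atTop (𝓝 (g x)))
    {s : Set α} (hs : μ s < ∞) :
    Tendsto (fun n => ∫ x in s, f n x ∂μ) atTop (𝓝 (∫ x in s, g x ∂μ)) :=
  haveI : IsFiniteMeasure (μ.restrict s) := isFiniteMeasure_restrict.2 hs.ne
  tendsto_integral_filter_of_norm_le_const (Eventually.of_forall fun n => (hf n).restrict)
    ⟨C, Eventually.of_forall fun n => ae_restrict_of_ae (hfC n)⟩ (ae_restrict_of_ae hfg)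

theorem ae_eq_of_tendsto_ae_of_tendsto_setIntegral [CompleteSpace E] [SigmaFinite μ]
    {f : ℕ → α → E} {g U : α → E} {C : ℝ}
    (hf : ∀ n, AEStronglyMeasurable (f n) μ) (hfC : ∀ n, ∀ᵐ x ∂μ, ‖f n x‖ ≤ C)
    (hfg : ∀ᵐ x ∂μ, Tendsto (fun n => f n x) atTop (𝓝 (g x)))
    (hU : ∀ s, MeasurableSet s → μ s < ∞ → IntegrableOn U s μ)
    (hfU : ∀ s, MeasurableSet s → μ s < ∞ →
      Tendsto (fun n => ∫ x in s, f n x ∂μ) atTop (𝓝 (∫ x in s, U x ∂μ))) :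
    U =ᵐ[μ] g := by
  have hg_meas : AEStronglyMeasurable g μ := aestronglyMeasurable_of_tendsto_ae _ hf hfg
  have hgC : ∀ᵐ x ∂μ, ‖g x‖ ≤ C := by
    filter_upwards [hfg, ae_all_iff.2 hfC] with x hx hxC
    exact le_of_tendsto' hx.norm hxC
  exact ae_eq_of_forall_setIntegral_eq_of_sigmaFinite hU
    (fun s _ hs => Measure.integrableOn_of_bounded hs.ne hg_meas (ae_restrict_of_ae hgC))
    fun s hs hμs => tendsto_nhds_unique (hfU s hs hμs)
      (tendsto_setIntegral_of_tendsto_ae_of_norm_le_const hf hfC hfg hμs)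

end WeakLimit

lemma norm_div_sqrt_norm_sq_add_le_one {e : ℝ} (he : 0 ≤ e) (z : ℂ) :
    ‖z / ((Real.sqrt (‖z‖ ^ 2 + e) : ℝ) : ℂ)‖ ≤ 1 := by
  rw [norm_div, Complex.norm_real, Real.norm_of_nonneg (Real.sqrt_nonneg _)]
  refine div_le_one_of_le₀ ?_ (Real.sqrt_nonneg _)
  exact Real.le_sqrt_of_sq_le (le_add_of_nonneg_right he)

lemma tendsto_div_sqrt_norm_sq_add {ε : ℕ → ℝ} (hε : Tendsto ε atTop (𝓝 0))
    {z : ℕ → ℂ} {w : ℂ} (hw : w ≠ 0) (hz : Tendsto z atTop (𝓝 w)) :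
    Tendsto (fun n => z n / ((Real.sqrt (‖z n‖ ^ 2 + ε n) : ℝ) : ℂ)) atTop
      (𝓝 (w / (‖w‖ : ℂ))) := by
  have hden : Tendsto (fun n => Real.sqrt (‖z n‖ ^ 2 + ε n)) atTop (𝓝 ‖w‖) := by
    simpa [Real.sqrt_sq (norm_nonneg w)] using ((hz.norm.pow 2).add hε).sqrt
  exact hz.div (continuous_ofReal.continuousAt.tendsto.comp hden) (by simpa using hw)

lemma integral_mul_conj_indicator_one {α : Type*} [MeasurableSpace α] {μ : Measure α}
    {s : Set α} (hs : MeasurableSet s) (f : α → ℂ) :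
    ∫ x, f x * starRingEnd ℂ (s.indicator 1 x) ∂μ = ∫ x in s, f x ∂μ := by
  rw [← integral_indicator hs]
  congr 1 with x
  by_cases hx : x ∈ s <;> simp [hx]

theorem weakStar_limit_saturated_section_general
    (N : ℕ) (Ω : Set (EuclideanSpace ℝ (Fin N)))
    (ε : ℕ → ℝ) (hε : ∀ n, 0 < ε n) (hε0 : Tendsto ε atTop (𝓝 0))
    (un : ℕ → EuclideanSpace ℝ (Fin N) → ℂ) (hm : ∀ n, Measurable (un n))
    (u U : EuclideanSpace ℝ (Fin N) → ℂ) (hUm : Measurable U)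
    (hconv : ∀ᵐ x ∂(volume.restrict Ω), Tendsto (fun n => un n x) atTop (𝓝 (u x)))
    (hUb : ∀ᵐ x ∂(volume.restrict Ω), ‖U x‖ ≤ 1)
    (hweak : ∀ h : EuclideanSpace ℝ (Fin N) → ℂ, IntegrableOn h Ω volume →
      Tendsto
        (fun n => ∫ x in Ω,
          (un n x / ((Real.sqrt (‖un n x‖ ^ 2 + ε n) : ℝ) : ℂ)) * (starRingEnd ℂ) (h x))
        atTop (𝓝 (∫ x in Ω, U x * (starRingEnd ℂ) (h x)))) :
    ∀ᵐ x ∂(volume.restrict Ω), u x ≠ 0 → U x = u x / (‖u x‖ : ℂ) := by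
  set μ := volume.restrict Ω
  obtain ⟨v, hv, huv⟩ : AEMeasurable u μ :=
    aemeasurable_of_tendsto_metrizable_ae atTop (fun n => (hm n).aemeasurable) hconv
  set S := {x | v x ≠ 0}
  have hS : MeasurableSet S := (hv (measurableSet_singleton 0)).compl
  have hUv : U =ᵐ[μ.restrict S] fun x => v x / (‖v x‖ : ℂ) := by
    refine ae_eq_of_tendsto_ae_of_tendsto_setIntegral (C := 1)
      (f := fun n x => un n x / ((Real.sqrt (‖un n x‖ ^ 2 + ε n) : ℝ) : ℂ))
      (fun n => (by fun_prop : Measurable _).aestronglyMeasurable)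
      (fun n => Eventually.of_forall fun x => norm_div_sqrt_norm_sq_add_le_one (hε n).le _) ?_
      (fun s _ hs => Measure.integrableOn_of_bounded hs.ne hUm.aestronglyMeasurable
        (ae_restrict_of_ae (ae_restrict_of_ae hUb))) ?_
    · filter_upwards [ae_restrict_mem hS, ae_restrict_of_ae hconv, ae_restrict_of_ae huv]
        with x hxS hx hxv
      exact tendsto_div_sqrt_norm_sq_add hε0 hxS (hxv ▸ hx)
    · intro s hs hμs
      rw [Measure.restrict_apply hs] at hμs
      simp only [Measure.restrict_restrict hs, ← integral_mul_conj_indicator_one (hs.inter hS)]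
      exact hweak _ ((integrable_indicator_iff (hs.inter hS)).2 (integrableOn_const hμs.ne))
  filter_upwards [(ae_restrict_iff' hS).1 hUv, huv] with x hx hxv hu0
  rw [hxv] at hu0 ⊢
  exact hx hu0

/-- Identification of the weak★ limit of the regularized saturated sections:
if `εₙ ↓ 0`, `uₙ → u` a.e. on `Ω`, `|U| ≤ 1` a.e. on `Ω`, and
`g_{εₙ}(uₙ) = uₙ/(|uₙ|²+εₙ)^{1/2} ⇀ U` in the weak★ topology of `L^∞(Ω)` against
`L¹(Ω)`, then `U = u/|u|` a.e. on `{u ≠ 0}`. -/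
theorem weakStar_limit_saturated_section
    (N : ℕ) (Ω : Set (EuclideanSpace ℝ (Fin N))) (hΩ : IsOpen Ω) (hΩne : Ω.Nonempty)
    (ε : ℕ → ℝ) (hε : ∀ n, 0 < ε n) (hε0 : Tendsto ε atTop (𝓝 0))
    (un : ℕ → EuclideanSpace ℝ (Fin N) → ℂ) (hm : ∀ n, Measurable (un n))
    (u U : EuclideanSpace ℝ (Fin N) → ℂ) (hUm : Measurable U)
    (hconv : ∀ᵐ x ∂(volume.restrict Ω), Tendsto (fun n => un n x) atTop (𝓝 (u x)))
    (hUb : ∀ᵐ x ∂(volume.restrict Ω), ‖U x‖ ≤ 1)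
    (hweak : ∀ h : EuclideanSpace ℝ (Fin N) → ℂ, IntegrableOn h Ω volume →
      Tendsto
        (fun n => ∫ x in Ω,
          (un n x / ((Real.sqrt (‖un n x‖ ^ 2 + ε n) : ℝ) : ℂ)) * (starRingEnd ℂ) (h x))
        atTop (𝓝 (∫ x in Ω, U x * (starRingEnd ℂ) (h x)))) :
    ∀ᵐ x ∂(volume.restrict Ω), u x ≠ 0 → U x = u x / (‖u x‖ : ℂ) :=
  weakStar_limit_saturated_section_general N Ω ε hε hε0 un hm u U hUm hconv hUb hweak
end
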